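/- arXiv:2009.05861 — 6 statements merged into one kernel-verified Lean document; each statement's English description precedes it below -/
import Mathlib

section
/- Let a = (a₁,...,a_k, 0,...,0, a_{k+m+1}) be a weak composition with positive integers a₁ ≥ ⋯ ≥ a_k, m ≥ 0 zeros, and 0 ≤ a_{k+m+1} ≤ a_k. Then the basic quasi-Yamanouchi Kohnert tableau of content a is the unique quasi-Yamanouchi Kohnert tableau of content a. -/
/-- `b` dominates `a`: every partial sum of `b` is at least that of `a`. -/
def Dominates (b a : List ℕ) : Prop :=
  ∀ i : ℕ, (a.take i).sum ≤ (b.take i).sum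

/-- `flatten a` removes the zero parts of a weak composition. -/
def Flatten (a : List ℕ) : List ℕ := a.filter (· != 0)

/-- `β` refines `α`: `β` decomposes into consecutive nonempty blocks whose sums give `α`. -/
def Refines (β α : List ℕ) : Prop :=
  ∃ L : List (List ℕ), (∀ l ∈ L, l ≠ []) ∧ L.flatten = β ∧ L.map List.sum = α

/-- The set of inversions of a composition: pairs `i < j` with `α i < α j`. -/
def invSet (α : List ℕ) : Finset (Fin α.length × Fin α.length) :=
  Finset.univ.filter fun p => p.1 < p.2 ∧ α.get p.1 < α.get p.2

/-- Kohnert tableau of content `a`, encoded as a filling `T : (row, col) → entry`,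
with `0` meaning an empty position, rows and columns indexed from `1`. -/
def IsKohnert (a : List ℕ) (T : ℕ × ℕ → ℕ) : Prop :=
  -- cells live at positive coordinates
  (∀ r c, T (r, c) ≠ 0 → 1 ≤ r ∧ 1 ≤ c) ∧
  -- entries are among 1,…,ℓ
  (∀ r c, T (r, c) ≠ 0 → 1 ≤ T (r, c) ∧ T (r, c) ≤ a.length) ∧
  -- (i) for each i there is exactly one i in each column 1,…,aᵢ and none beyond
  (∀ i, 1 ≤ i → i ≤ a.length → ∀ c, 1 ≤ c →
    (c ≤ a.getD (i - 1) 0 → ∃! r, T (r, c) = i) ∧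
    (a.getD (i - 1) 0 < c → ∀ r, T (r, c) ≠ i)) ∧
  -- (ii) each entry in row r is at least r
  (∀ r c, T (r, c) ≠ 0 → r ≤ T (r, c)) ∧
  -- (iii) the cells filled with a given entry weakly descend from left to right
  (∀ r c r' c', T (r, c) ≠ 0 → T (r, c) = T (r', c') → c < c' → r' ≤ r) ∧
  -- (iv) if i < j share a column with i above j, there is an i in the next column,
  -- strictly above the cell containing j
  (∀ r r' c, T (r, c) ≠ 0 → T (r', c) ≠ 0 → T (r, c) < T (r', c) → r' < r →
    ∃ r'', r' < r'' ∧ T (r'', c + 1) = T (r, c))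

/-- Quasi-Yamanouchi Kohnert tableau: additionally (v) every nonempty row `r` contains
the entry `r`, or has a cell in row `r+1` weakly right of one of its cells. -/
def IsQYKohnert (a : List ℕ) (T : ℕ × ℕ → ℕ) : Prop :=
  IsKohnert a T ∧
  ∀ r, 1 ≤ r → (∃ c, T (r, c) ≠ 0) →
    ((∃ c, T (r, c) = r) ∨ ∃ c c', T (r, c) ≠ 0 ∧ T (r + 1, c') ≠ 0 ∧ c ≤ c')

/-- The weight of a filling: the list recording the number of cells in each row `1,…,ℓ`. -/
def wtList (a : List ℕ) (T : ℕ × ℕ → ℕ) : List ℕ :=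
  (List.range a.length).map fun r =>
    ((Finset.Icc 1 a.sum).filter fun c => T (r + 1, c) ≠ 0).card

open Classical in
/-- Coefficient of the monomial `x^b` in the fundamental slide polynomial `𝔉_a`. -/
noncomputable def fundCoeff (a b : List ℕ) : ℕ :=
  if b.length = a.length ∧ Dominates b a ∧ Refines (Flatten b) (Flatten a) then 1 else 0

/-- Coefficient of the monomial `x^b` in the key polynomial `κ_a`:
the number of Kohnert tableaux of content `a` and weight `b`. -/
noncomputable def keyCoeff (a b : List ℕ) : ℕ :=
  Set.ncard {T : ℕ × ℕ → ℕ | IsKohnert a T ∧ wtList a T = b}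

/-- The basic filling of content `a`: `aᵢ` cells filled with `i` in row `i`, columns `1,…,aᵢ`. -/
def basicFilling (a : List ℕ) : ℕ × ℕ → ℕ := fun p =>
  if 1 ≤ p.1 ∧ p.1 ≤ a.length ∧ 1 ≤ p.2 ∧ p.2 ≤ a.getD (p.1 - 1) 0 then p.1 else 0

/-- `κ_α` is multiplicity free in the fundamental slide basis: quasi-Yamanouchi
Kohnert tableaux of content `α` have pairwise distinct weights. -/
def MultFree (α : List ℕ) : Prop :=
  ∀ T₁ T₂ : ℕ × ℕ → ℕ, IsQYKohnert α T₁ → IsQYKohnert α T₂ →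
    wtList α T₁ = wtList α T₂ → T₁ = T₂

/-!
Every entry `i ≤ k` of a Kohnert tableau of content `a` lies in row `i`: by induction on `i`,
the `i` in column `c` lies in some row `r ≤ i`, and `r < i` is impossible because
`c ≤ aᵢ ≤ a_r` puts an `r` in that cell. The only other entry is the last one, `L`, filling
columns `1, …, z` with `z ≤ a_k`; an `L` in a row `r < L` must have `k < r` by the first step,
so row `r` contains no `r`, and the quasi-Yamanouchi condition gives a cell of row `r + 1` weakly
right of a cell of row `r`. Both cells hold `L`, which contradicts either the uniqueness of `L` in
a column or the weak descent of the `L`s. Hence every entry sits in its own row, which forces the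
basic tableau.
-/

theorem basicFilling_apply (a : List ℕ) (r c : ℕ) :
    basicFilling a (r, c) =
      if 1 ≤ r ∧ r ≤ a.length ∧ 1 ≤ c ∧ c ≤ a.getD (r - 1) 0 then r else 0 :=
  rfl

theorem basicFilling_ne_zero_iff {a : List ℕ} {r c : ℕ} :
    basicFilling a (r, c) ≠ 0 ↔ 1 ≤ r ∧ r ≤ a.length ∧ 1 ≤ c ∧ c ≤ a.getD (r - 1) 0 := by
  rw [basicFilling_apply]
  split_ifs with h
  · exact iff_of_true (by omega) h
  · exact iff_of_false (fun h0 => h0 rfl) h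

theorem basicFilling_eq_self {a : List ℕ} {r c : ℕ} (h : basicFilling a (r, c) ≠ 0) :
    basicFilling a (r, c) = r := by
  rw [basicFilling_apply, if_pos (basicFilling_ne_zero_iff.mp h)]

theorem isQYKohnert_basicFilling (a : List ℕ) : IsQYKohnert a (basicFilling a) := by
  refine ⟨⟨?_, ?_, ?_, ?_, ?_, ?_⟩, ?_⟩
  · intro r c h
    obtain ⟨hr, -, hc, -⟩ := basicFilling_ne_zero_iff.mp h
    exact ⟨hr, hc⟩
  · intro r c h
    obtain ⟨hr, hrl, -, -⟩ := basicFilling_ne_zero_iff.mp h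
    rw [basicFilling_eq_self h]
    exact ⟨hr, hrl⟩
  · intro i hi hil c hc
    refine ⟨fun hca => ⟨i, ?_, fun r (hr : basicFilling a (r, c) = i) => ?_⟩,
      fun hca r hr => ?_⟩
    · exact (basicFilling_apply a i c).trans (if_pos ⟨hi, hil, hc, hca⟩)
    · rwa [basicFilling_eq_self (by omega)] at hr
    · have h : basicFilling a (r, c) ≠ 0 := by omega
      rw [basicFilling_eq_self h] at hr
      subst hr
      have := (basicFilling_ne_zero_iff.mp h).2.2.2
      omega
  · intro r c h
    rw [basicFilling_eq_self h]
  · intro r c r' c' h heq _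
    have h' : basicFilling a (r', c') ≠ 0 := by rwa [heq] at h
    rw [basicFilling_eq_self h, basicFilling_eq_self h'] at heq
    omega
  · intro r r' c h h' hlt _
    rw [basicFilling_eq_self h, basicFilling_eq_self h'] at hlt
    omega
  · rintro r - ⟨c, h⟩
    obtain ⟨hr, hrl, hc, hca⟩ := basicFilling_ne_zero_iff.mp h
    exact Or.inl ⟨1, by rw [basicFilling_apply, if_pos ⟨hr, hrl, le_rfl, hc.trans hca⟩]⟩

namespace IsKohnert

variable {a : List ℕ} {T : ℕ × ℕ → ℕ} {r c : ℕ}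

theorem one_le_row (hT : IsKohnert a T) (h : T (r, c) ≠ 0) : 1 ≤ r := (hT.1 r c h).1

theorem one_le_col (hT : IsKohnert a T) (h : T (r, c) ≠ 0) : 1 ≤ c := (hT.1 r c h).2

theorem le_length (hT : IsKohnert a T) (h : T (r, c) ≠ 0) : T (r, c) ≤ a.length :=
  (hT.2.1 r c h).2

theorem row_le (hT : IsKohnert a T) (h : T (r, c) ≠ 0) : r ≤ T (r, c) := hT.2.2.2.1 r c h

theorem row_le_of_col_lt (hT : IsKohnert a T) {r' c' : ℕ} (h : T (r, c) ≠ 0)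
    (heq : T (r, c) = T (r', c')) (hc : c < c') : r' ≤ r :=
  hT.2.2.2.2.1 r c r' c' h heq hc

theorem col_le (hT : IsKohnert a T) (h : T (r, c) ≠ 0) : c ≤ a.getD (T (r, c) - 1) 0 := by
  by_contra hc
  exact (hT.2.2.1 _ (by omega) (hT.le_length h) c (hT.one_le_col h)).2 (by omega) r rfl

theorem existsUnique_row (hT : IsKohnert a T) {i : ℕ} (hi : 1 ≤ i) (hc : 1 ≤ c)
    (hca : c ≤ a.getD (i - 1) 0) : ∃! r, T (r, c) = i := by
  have hil : i ≤ a.length := by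
    by_contra hil
    rw [List.getD_eq_default _ _ (by omega)] at hca
    omega
  exact (hT.2.2.1 i hi hil c hc).1 hca

theorem row_eq_of_apply_eq (hT : IsKohnert a T) {r' : ℕ} (h : T (r, c) ≠ 0)
    (heq : T (r', c) = T (r, c)) : r' = r :=
  (hT.existsUnique_row (by omega) (hT.one_le_col h) (hT.col_le h)).unique heq rfl

theorem eq_basicFilling (hT : IsKohnert a T) (hdiag : ∀ r c, T (r, c) ≠ 0 → T (r, c) = r) :
    T = basicFilling a := by
  funext ⟨r, c⟩
  rw [basicFilling_apply]
  split_ifs with hb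
  · obtain ⟨hr, -, hc, hca⟩ := hb
    obtain ⟨r', hr', -⟩ := hT.existsUnique_row hr hc hca
    have hrow := hdiag r' c (by omega)
    rw [hr'] at hrow
    subst hrow
    exact hr'
  · by_contra h
    have hrow := hdiag r c h
    refine hb ⟨hT.one_le_row h, hrow ▸ hT.le_length h, hT.one_le_col h, ?_⟩
    simpa only [hrow] using hT.col_le h

theorem apply_eq_self_of_antitoneOn (hT : IsKohnert a T) {k : ℕ}
    (hanti : AntitoneOn (fun i => a.getD i 0) (Set.Iio k)) {i : ℕ} (hi : 1 ≤ i) (hik : i ≤ k)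
    (hc : 1 ≤ c) (hca : c ≤ a.getD (i - 1) 0) : T (i, c) = i := by
  induction i using Nat.strong_induction_on with
  | _ i ih =>
    obtain ⟨r, hr, -⟩ := hT.existsUnique_row hi hc hca
    have hne : T (r, c) ≠ 0 := by omega
    rcases (hr ▸ hT.row_le hne : r ≤ i).eq_or_lt with rfl | hlt
    · exact hr
    · have hr1 := hT.one_le_row hne
      have hcr : c ≤ a.getD (r - 1) 0 :=
        hca.trans (hanti (by simp only [Set.mem_Iio]; omega) (by simp only [Set.mem_Iio]; omega)
          (by omega))
      have := ih r hlt hr1 (by omega) hcr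
      omega

theorem apply_eq_row_of_le (hT : IsKohnert a T) {k : ℕ}
    (hanti : AntitoneOn (fun i => a.getD i 0) (Set.Iio k)) (h : T (r, c) ≠ 0)
    (hk : T (r, c) ≤ k) : T (r, c) = r :=
  hT.row_eq_of_apply_eq h
    (hT.apply_eq_self_of_antitoneOn hanti (by omega) hk (hT.one_le_col h) (hT.col_le h))

theorem eq_length_of_lt (hT : IsKohnert a T) {k : ℕ}
    (hmid : ∀ i, k ≤ i → i + 1 < a.length → a.getD i 0 = 0) (h : T (r, c) ≠ 0)
    (hk : k < T (r, c)) : T (r, c) = a.length := by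
  have hl := hT.le_length h
  by_contra hne
  have hca := hT.col_le h
  rw [hmid _ (by omega) (by omega)] at hca
  have := hT.one_le_col h
  omega

end IsKohnert

/- `a.getD i 0` is `a_{i+1}`: with `L = a.length`, the hypotheses say `a₁ ≥ ⋯ ≥ a_k`,
`a_{k+1} = ⋯ = a_{L-1} = 0` and `a_L ≤ a₁, …, a_k`. -/
theorem IsQYKohnert.apply_eq_row_of_lt {a : List ℕ} {T : ℕ × ℕ → ℕ} {r c k : ℕ}
    (hT : IsQYKohnert a T) (hanti : AntitoneOn (fun i => a.getD i 0) (Set.Iio k))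
    (hmid : ∀ i, k ≤ i → i + 1 < a.length → a.getD i 0 = 0)
    (hlast : ∀ i < k, a.getD (a.length - 1) 0 ≤ a.getD i 0)
    (h : T (r, c) ≠ 0) (hk : k < T (r, c)) : T (r, c) = r := by
  obtain ⟨hK, hqy⟩ := hT
  have hL : T (r, c) = a.length := hK.eq_length_of_lt hmid h hk
  have hrL := hK.row_le h
  have hr1 := hK.one_le_row h
  by_contra hne
  have hkr : k < r := by
    by_contra hrk
    have hcr : c ≤ a.getD (r - 1) 0 :=
      (hL ▸ hK.col_le h).trans (hlast (r - 1) (by omega))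
    have := hK.apply_eq_self_of_antitoneOn hanti hr1 (by omega) (hK.one_le_col h) hcr
    omega
  rcases hqy r hr1 ⟨c, h⟩ with ⟨c', hc'⟩ | ⟨c₁, c₂, h₁, h₂, hle⟩
  · have := hK.eq_length_of_lt hmid (r := r) (c := c') (by omega) (by omega)
    omega
  · have e₁ := hK.eq_length_of_lt hmid h₁ (lt_of_lt_of_le hkr (hK.row_le h₁))
    have e₂ := hK.eq_length_of_lt hmid h₂ (by have := hK.row_le h₂; omega)
    rcases hle.eq_or_lt with rfl | hlt
    · have := hK.row_eq_of_apply_eq h₁ (e₂.trans e₁.symm)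
      omega
    · have := hK.row_le_of_col_lt h₁ (e₁.trans e₂.symm) hlt
      omega

theorem IsQYKohnert.eq_basicFilling {a : List ℕ} {T : ℕ × ℕ → ℕ} {k : ℕ} (hT : IsQYKohnert a T)
    (hanti : AntitoneOn (fun i => a.getD i 0) (Set.Iio k))
    (hmid : ∀ i, k ≤ i → i + 1 < a.length → a.getD i 0 = 0)
    (hlast : ∀ i < k, a.getD (a.length - 1) 0 ≤ a.getD i 0) :
    T = basicFilling a :=
  hT.1.eq_basicFilling fun _ _ h => (le_or_gt _ k).elim (hT.1.apply_eq_row_of_le hanti h)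
    (hT.apply_eq_row_of_lt hanti hmid hlast h)

theorem antitoneOn_getD_append {β : List ℕ} (hsort : β.Pairwise (· ≥ ·)) (l : List ℕ) :
    AntitoneOn (fun i => (β ++ l).getD i 0) (Set.Iio β.length) := by
  intro i hi j hj hij
  simp only [Set.mem_Iio] at hi hj
  simp only [List.getD_append _ _ _ _ hi, List.getD_append _ _ _ _ hj,
    List.getD_eq_getElem _ _ hi, List.getD_eq_getElem _ _ hj]
  exact hsort.rel_get_of_le (a := ⟨i, hi⟩) (b := ⟨j, hj⟩) hij

theorem getD_append_replicate_zero (β l : List ℕ) {m i : ℕ} (hi : β.length ≤ i)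
    (him : i < β.length + m) : (β ++ List.replicate m 0 ++ l).getD i 0 = 0 := by
  rw [List.getD_append _ _ _ _ (by simp only [List.length_append, List.length_replicate]; omega),
    List.getD_append_right _ _ _ _ hi]
  exact List.getD_replicate _ (by omega)

theorem le_getElem_of_le_getLast {β : List ℕ} {z : ℕ} (hβ : β ≠ [])
    (hsort : β.Pairwise (· ≥ ·)) (hz : z ≤ β.getLast hβ) {i : ℕ} (hi : i < β.length) :
    z ≤ β[i] := by
  rw [List.getLast_eq_getElem] at hz
  exact hz.trans (hsort.rel_get_of_le (a := ⟨i, hi⟩) (b := ⟨β.length - 1, by omega⟩)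
    (Fin.mk_le_mk.mpr (by omega)))

theorem stmt10_general (β : List ℕ) (m z : ℕ) (hβ : β ≠ [])
    (hsort : List.Pairwise (· ≥ ·) β) (hz : z ≤ β.getLast hβ)
    (a : List ℕ) (ha : a = β ++ List.replicate m 0 ++ [z]) :
    IsQYKohnert a (basicFilling a) ∧
    ∀ T : ℕ × ℕ → ℕ, IsQYKohnert a T → T = basicFilling a := by
  subst ha
  have hlen : (β ++ List.replicate m 0 ++ [z]).length = β.length + m + 1 := by
    simp only [List.length_append, List.length_replicate, List.length_singleton]
  refine ⟨isQYKohnert_basicFilling _, fun T hT => hT.eq_basicFilling (k := β.length) ?_ ?_ ?_⟩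
  · simpa only [List.append_assoc] using antitoneOn_getD_append hsort (List.replicate m 0 ++ [z])
  · intro i hi hil
    exact getD_append_replicate_zero β [z] hi (by omega)
  · intro i hi
    rw [hlen, List.append_assoc, List.getD_append _ _ _ _ hi, List.getD_eq_getElem _ _ hi]
    simpa using le_getElem_of_le_getLast hβ hsort hz hi

/-- for `a = (a₁,…,a_k, 0,…,0, z)` with `a₁ ≥ ⋯ ≥ a_k > 0` and
`z ≤ a_k`, the basic filling is the unique quasi-Yamanouchi Kohnert tableau
of content `a`. -/
theorem stmt10 (β : List ℕ) (m z : ℕ) (hβ : β ≠ []) (hpos : ∀ x ∈ β, 0 < x)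
    (hsort : List.Pairwise (· ≥ ·) β) (hz : z ≤ β.getLast hβ)
    (a : List ℕ) (ha : a = β ++ List.replicate m 0 ++ [z]) :
    IsQYKohnert a (basicFilling a) ∧
    ∀ T : ℕ × ℕ → ℕ, IsQYKohnert a T → T = basicFilling a :=
  stmt10_general β m z hβ hsort hz a ha
end

section
/- If a weak composition a = (a₁,...,a_ℓ) has two nonzero entries 0 < a_i < a_j with i < j, then there exist at least two distinct quasi-Yamanouchi Kohnert tableaux of content a; equivalently the key polynomial κ_a has at least two terms in its fundamental slide expansion. -/
/-!
The basic filling, with `aᵣ` copies of `r` in row `r`, is a quasi-Yamanouchi Kohnert tableau.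
Replace `j` by the first index after `i` with `aᵢ < aⱼ`, so that every row strictly between
them has length at most `aᵢ`. Dropping the cells of row `j` beyond column `aᵢ` straight down
into row `i` then yields a second quasi-Yamanouchi Kohnert tableau, whose row `i` has `aⱼ`
cells instead of `aᵢ`; hence the two weights differ.
-/

lemma exists_first_gt_after {α : Type*} [LinearOrder α] (f : ℕ → α) {i j : ℕ} (hij : i < j)
    (hlt : f i < f j) :
    ∃ k, i < k ∧ k ≤ j ∧ f i < f k ∧ ∀ r, i < r → r < k → f r ≤ f i := by
  classical
  have hex : ∃ k, i < k ∧ f i < f k := ⟨j, hij, hlt⟩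
  refine ⟨Nat.find hex, (Nat.find_spec hex).1, Nat.find_min' hex ⟨hij, hlt⟩,
    (Nat.find_spec hex).2, fun r hir hr => ?_⟩
  exact not_lt.1 fun h => Nat.find_min hex hr ⟨hir, h⟩

lemma wtList_getD_eq_of_row {a : List ℕ} {T : ℕ × ℕ → ℕ} {r m : ℕ} (hr : r < a.length)
    (hm : m ≤ a.sum) (hrow : ∀ c, 1 ≤ c → (T (r + 1, c) ≠ 0 ↔ c ≤ m)) :
    (wtList a T).getD r 0 = m := by
  have hcells : (Finset.Icc 1 a.sum).filter (fun c => T (r + 1, c) ≠ 0) = Finset.Icc 1 m := by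
    ext c
    simp only [Finset.mem_filter, Finset.mem_Icc]
    constructor
    · rintro ⟨⟨hc, -⟩, hT⟩
      exact ⟨hc, (hrow c hc).1 hT⟩
    · rintro ⟨hc, hcm⟩
      exact ⟨⟨hc, hcm.trans hm⟩, (hrow c hc).2 hcm⟩
  rw [wtList, List.getD_eq_getElem _ _ (by simpa using hr), List.getElem_map,
    List.getElem_range, hcells, Nat.card_Icc, Nat.add_sub_cancel]

lemma List.getD_le_sum (a : List ℕ) (k : ℕ) : a.getD k 0 ≤ a.sum := by
  rcases lt_or_ge k a.length with hk | hk
  · rw [List.getD_eq_getElem _ _ hk]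
    exact List.le_sum_of_mem (List.getElem_mem hk)
  · rw [List.getD_eq_default _ _ hk]
    exact Nat.zero_le _

lemma basicFilling_eq_zero_or (a : List ℕ) (r c : ℕ) :
    basicFilling a (r, c) = 0 ∨
      basicFilling a (r, c) = r ∧ 1 ≤ r ∧ r ≤ a.length ∧ 1 ≤ c ∧ c ≤ a.getD (r - 1) 0 := by
  unfold basicFilling
  split_ifs with h
  · exact Or.inr ⟨rfl, h⟩
  · exact Or.inl rfl

lemma basicFilling_of_le {a : List ℕ} {r c : ℕ} (hr : 1 ≤ r) (hra : r ≤ a.length) (hc : 1 ≤ c)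
    (hca : c ≤ a.getD (r - 1) 0) : basicFilling a (r, c) = r :=
  if_pos ⟨hr, hra, hc, hca⟩

/-- Here `i`, `j` index `a` from `0` while rows are numbered from `1`. For `i = j` nothing
moves, and this is `basicFilling a`. -/
def dropFilling (a : List ℕ) (i j : ℕ) : ℕ × ℕ → ℕ := fun p =>
  if p.1 = i + 1 ∧ a.getD i 0 < p.2 ∧ p.2 ≤ a.getD j 0 then j + 1
  else if p.1 = j + 1 ∧ a.getD i 0 < p.2 then 0
  else basicFilling a p

section dropFilling

variable {a : List ℕ} {i j : ℕ}

lemma dropFilling_of_dropped {r c : ℕ} (hr : r = i + 1) (hic : a.getD i 0 < c)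
    (hcj : c ≤ a.getD j 0) : dropFilling a i j (r, c) = j + 1 :=
  if_pos ⟨hr, hic, hcj⟩

lemma dropFilling_of_not_dropped {r c : ℕ} (hi : r = i + 1 → c ≤ a.getD i 0)
    (hj : r = j + 1 → c ≤ a.getD i 0) : dropFilling a i j (r, c) = basicFilling a (r, c) := by
  unfold dropFilling
  rw [if_neg (by omega), if_neg (by omega)]

lemma dropFilling_cases (a : List ℕ) (i j r c : ℕ) :
    (dropFilling a i j (r, c) = j + 1 ∧ r = i + 1 ∧ a.getD i 0 < c ∧ c ≤ a.getD j 0) ∨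
      dropFilling a i j (r, c) = 0 ∨
      (dropFilling a i j (r, c) = r ∧ 1 ≤ r ∧ r ≤ a.length ∧ 1 ≤ c ∧ c ≤ a.getD (r - 1) 0 ∧
        (r = i + 1 → c ≤ a.getD i 0) ∧ (r = j + 1 → c ≤ a.getD i 0)) := by
  by_cases hdrop : r = i + 1 ∧ a.getD i 0 < c ∧ c ≤ a.getD j 0
  · exact Or.inl ⟨dropFilling_of_dropped hdrop.1 hdrop.2.1 hdrop.2.2, hdrop⟩
  by_cases hvac : r = j + 1 ∧ a.getD i 0 < c
  · refine Or.inr (Or.inl ?_)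
    unfold dropFilling
    rw [if_neg hdrop, if_pos hvac]
  rw [dropFilling, if_neg hdrop, if_neg hvac]
  rcases basicFilling_eq_zero_or a r c with hzero | ⟨hval, hr, hra, hc, hca⟩
  · exact Or.inr (Or.inl hzero)
  refine Or.inr (Or.inr ⟨hval, hr, hra, hc, hca, ?_, by omega⟩)
  rintro rfl
  simpa using hca

lemma dropFilling_column {v c : ℕ} (hv : 1 ≤ v) (hva : v ≤ a.length) (hc : 1 ≤ c) :
    (c ≤ a.getD (v - 1) 0 → ∃! r, dropFilling a i j (r, c) = v) ∧
      (a.getD (v - 1) 0 < c → ∀ r, dropFilling a i j (r, c) ≠ v) := by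
  by_cases hdrop : v = j + 1 ∧ a.getD i 0 < c
  · obtain ⟨rfl, hic⟩ := hdrop
    simp only [Nat.add_sub_cancel]
    refine ⟨fun hcj => ⟨i + 1, dropFilling_of_dropped rfl hic hcj, fun r hr => ?_⟩,
      fun hjc r hr => ?_⟩ <;>
    rcases dropFilling_cases a i j r c with h | h | h <;> omega
  · refine ⟨fun hcv => ⟨v, ?_, fun r hr => ?_⟩, fun hvc r hr => ?_⟩
    · have hvi : v = i + 1 → c ≤ a.getD i 0 := by
        rintro rfl
        simpa using hcv
      exact (dropFilling_of_not_dropped hvi (by omega)).trans (basicFilling_of_le hv hva hc hcv)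
    · rcases dropFilling_cases a i j r c with h | h | h <;> omega
    · rcases dropFilling_cases a i j r c with h | h | ⟨hval, h⟩
      · omega
      · omega
      · obtain rfl : r = v := hval ▸ hr
        omega

lemma isQYKohnert_dropFilling (hij : i ≤ j) (hj : j < a.length) (h0 : 0 < a.getD i 0)
    (hmid : ∀ r, i < r → r < j → a.getD r 0 ≤ a.getD i 0) :
    IsQYKohnert a (dropFilling a i j) := by
  refine ⟨⟨fun r c h => ?_, fun r c h => ?_, fun v hv hva c hc => dropFilling_column hv hva hc,
    fun r c h => ?_, fun r c r' c' h he hcc => ?_, fun r r' c h h' hlt hrr => ?_⟩,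
    fun r _ ⟨c, h⟩ => Or.inl ⟨1, ?_⟩⟩
  · rcases dropFilling_cases a i j r c with hrc | hrc | hrc <;> omega
  · rcases dropFilling_cases a i j r c with hrc | hrc | hrc <;> omega
  · rcases dropFilling_cases a i j r c with hrc | hrc | hrc <;> omega
  · rcases dropFilling_cases a i j r c with hrc | hrc | hrc <;>
    rcases dropFilling_cases a i j r' c' with hrc' | hrc' | hrc' <;> omega
  · -- (iv) is vacuous: a dropped cell could only lie above a smaller entry in a row strictly
    -- between `i + 1` and `j + 1`, and those rows end at column `a.getD i 0` by `hmid`.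
    exfalso
    rcases dropFilling_cases a i j r c with hrc | hrc | hrc <;>
    rcases dropFilling_cases a i j r' c with hrc' | hrc' | hrc'
    all_goals first | omega | have := hmid (r - 1) (by omega) (by omega); omega
  · have hrow : 1 ≤ r ∧ r ≤ a.length ∧ 1 ≤ a.getD (r - 1) 0 := by
      rcases dropFilling_cases a i j r c with ⟨-, rfl, -⟩ | hrc | hrc
      · exact ⟨by omega, by omega, by rwa [Nat.add_sub_cancel]⟩
      · omega
      · omega
    exact (dropFilling_of_not_dropped (by omega) (by omega)).trans
      (basicFilling_of_le hrow.1 hrow.2.1 le_rfl hrow.2.2)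

lemma dropFilling_row_ne_zero_iff (hle : a.getD i 0 ≤ a.getD j 0)
    (hi : i < a.length) {c : ℕ} (hc : 1 ≤ c) :
    dropFilling a i j (i + 1, c) ≠ 0 ↔ c ≤ a.getD j 0 := by
  refine ⟨fun h => ?_, fun hcj => ?_⟩
  · rcases dropFilling_cases a i j (i + 1) c with hrc | hrc | hrc <;> omega
  · by_cases hci : c ≤ a.getD i 0
    · rw [dropFilling_of_not_dropped (fun _ => hci) (by omega),
        basicFilling_of_le (by omega) hi hc (by simpa using hci)]
      omega
    · rw [dropFilling_of_dropped rfl (not_le.1 hci) hcj]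
      omega

lemma wtList_getD_dropFilling (hle : a.getD i 0 ≤ a.getD j 0)
    (hi : i < a.length) : (wtList a (dropFilling a i j)).getD i 0 = a.getD j 0 :=
  wtList_getD_eq_of_row hi (List.getD_le_sum a j) fun _ hc => dropFilling_row_ne_zero_iff hle hi hc

end dropFilling

/-- if a weak composition has two nonzero entries `0 < aᵢ < aⱼ` with
`i < j`, then there are two distinct quasi-Yamanouchi Kohnert tableaux of content `a`,
of different weights, so `κ_a` has at least two fundamental slide terms. -/
theorem stmt11 (a : List ℕ) (i j : Fin a.length) (hij : i < j)
    (h0 : 0 < a.get i) (hlt : a.get i < a.get j) :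
    ∃ T₁ T₂ : ℕ × ℕ → ℕ, IsQYKohnert a T₁ ∧ IsQYKohnert a T₂ ∧
      T₁ ≠ T₂ ∧ wtList a T₁ ≠ wtList a T₂ := by
  simp only [← List.getD_eq_get (d := 0)] at h0 hlt
  obtain ⟨k, hik, hkj, hik_lt, hmid⟩ := exists_first_gt_after (a.getD · 0) hij hlt
  have hi : (i : ℕ) < a.length := i.isLt
  have hk : k < a.length := hkj.trans_lt j.isLt
  have hwt : wtList a (dropFilling a i i) ≠ wtList a (dropFilling a i k) := fun h => by
    have hrow := congrArg (·.getD i 0) h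
    simp only [wtList_getD_dropFilling le_rfl hi,
      wtList_getD_dropFilling hik_lt.le hi] at hrow
    omega
  exact ⟨_, _, isQYKohnert_dropFilling le_rfl hi h0 (fun _ h h' => (h.asymm h').elim),
    isQYKohnert_dropFilling hik.le hk h0 hmid, fun h => hwt (congrArg _ h), hwt⟩
end

section
/- For a strong composition α, κ_α = 𝔉_α (the key polynomial equals a single fundamental slide polynomial) if and only if α is a partition, i.e., α is weakly decreasing. -/
/-!
For a strong composition `α` every weak composition `b` of the same length whose flattening
refines `α` is `α` itself, so `𝔉_α = x^α`. The question is therefore whether `α` has a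
Kohnert tableau other than the basic one (row `i` holding `α_i` copies of `i`).

If `α` is a partition, induction on the entry shows that the copy of `j` in column `c` must
lie in row `j`, because every higher row already holds its own entry there; so the basic filling
is the only Kohnert tableau and `κ_α = x^α`. If `α_i < α_{i+1}`, moving the entries `i + 2` in the
columns `α_i < c ≤ α_{i+1}` up to row `i + 1` gives a second Kohnert tableau, whose weight swaps
`α_i` and `α_{i+1}` and hence is a monomial of `κ_α` missing from `𝔉_α`.
-/

namespace List

theorem lt_length_of_getD_pos {l : List ℕ} {k : ℕ} (h : 0 < l.getD k 0) : k < l.length := by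
  by_contra hk
  rw [getD_eq_default _ _ (not_lt.mp hk)] at h
  exact h.false

theorem getD_le_sum_s13 (l : List ℕ) (k : ℕ) : l.getD k 0 ≤ l.sum := by
  by_cases hk : k < l.length
  · rw [getD_eq_getElem _ _ hk]
    exact le_sum_of_mem (getElem_mem hk)
  · rw [getD_eq_default _ _ (not_lt.mp hk)]
    exact Nat.zero_le _

theorem Pairwise.getD_le_getD {l : List ℕ} (hl : l.Pairwise (· ≥ ·)) {j k : ℕ} (hjk : j ≤ k) :
    l.getD k 0 ≤ l.getD j 0 := by
  by_cases hk : k < l.length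
  · rw [getD_eq_getElem _ _ hk, getD_eq_getElem _ _ (hjk.trans_lt hk)]
    rcases hjk.eq_or_lt with rfl | hlt
    · rfl
    · exact hl.rel_get_of_lt (a := ⟨j, _⟩) (b := ⟨k, hk⟩) hlt
  · rw [getD_eq_default _ _ (not_lt.mp hk)]
    exact Nat.zero_le _

theorem exists_getD_lt_getD_succ_of_not_pairwise {l : List ℕ} (h : ¬ l.Pairwise (· ≥ ·)) :
    ∃ i, l.getD i 0 < l.getD (i + 1) 0 := by
  by_contra! hc
  refine h (isChain_iff_pairwise.mp (isChain_iff_getElem.mpr fun k hk => ?_))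
  have := hc k
  rwa [getD_eq_getElem _ _ hk, getD_eq_getElem _ _ (Nat.lt_of_succ_lt hk)] at this

theorem length_le_length_flatten {L : List (List ℕ)} (hL : ∀ l ∈ L, l ≠ []) :
    L.length ≤ L.flatten.length := by
  induction L with
  | nil => simp
  | cons l L ih =>
    simp only [forall_mem_cons] at hL
    simp only [length_cons, flatten_cons, length_append]
    have := length_pos_of_ne_nil hL.1
    have := ih hL.2
    omega

theorem flatten_eq_map_sum_of_length_flatten_le {L : List (List ℕ)} (hL : ∀ l ∈ L, l ≠ [])
    (hlen : L.flatten.length ≤ L.length) : L.flatten = L.map sum := by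
  induction L with
  | nil => rfl
  | cons l L ih =>
    simp only [forall_mem_cons] at hL
    simp only [length_cons, flatten_cons, length_append] at hlen
    have hL' := length_le_length_flatten hL.2
    obtain ⟨x, rfl⟩ : ∃ x, l = [x] := length_eq_one_iff.mp (by
      have := length_pos_of_ne_nil hL.1
      omega)
    simp only [length_singleton] at hlen
    simp [ih hL.2 (by omega)]

end List

theorem Refines.refl (α : List ℕ) : Refines α α := by
  refine ⟨α.map ([·]), by simp, ?_, by simp [Function.comp_def]⟩
  induction α with
  | nil => rfl
  | cons x α ih => simpa using ih

theorem Refines.eq_of_length_le {β α : List ℕ} (h : Refines β α) (hlen : β.length ≤ α.length) :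
    β = α := by
  obtain ⟨L, hL, rfl, rfl⟩ := h
  exact List.flatten_eq_map_sum_of_length_flatten_le hL (by simpa using hlen)

theorem flatten_eq_self {α : List ℕ} (hpos : ∀ x ∈ α, 0 < x) : Flatten α = α :=
  List.filter_eq_self.mpr fun x hx => by simpa using (hpos x hx).ne'

/-- The refinement condition alone forces `b = α`: a weak composition of length `ℓ(α)` has at
most `ℓ(α)` nonzero parts. -/
theorem fundCoeff_eq_ite {α : List ℕ} (hpos : ∀ x ∈ α, 0 < x) (b : List ℕ) :
    fundCoeff α b = if b = α then 1 else 0 := by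
  unfold fundCoeff
  rw [flatten_eq_self hpos]
  by_cases hb : b = α
  · subst hb
    have href : Refines (Flatten b) b := by
      rw [flatten_eq_self hpos]
      exact Refines.refl b
    rw [if_pos rfl, if_pos ⟨rfl, fun _ => le_rfl, href⟩]
  · rw [if_neg hb, if_neg]
    rintro ⟨hlen, -, href⟩
    have hflat_le : (Flatten b).length ≤ b.length := List.length_filter_le _ _
    have hflat : Flatten b = α := href.eq_of_length_le (hlen ▸ hflat_le)
    have hflat_len : (Flatten b).length = b.length := by rw [hflat, hlen]
    have hself : Flatten b = b :=
      List.filter_eq_self.mpr (List.length_filter_eq_length_iff.mp hflat_len)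
    exact hb (hself ▸ hflat)

theorem Set.finite_setOf_support_subset_of_le {ι : Type*} (s : Finset ι) (m : ℕ) :
    {f : ι → ℕ | (∀ x ∉ s, f x = 0) ∧ ∀ x, f x ≤ m}.Finite := by
  classical
  refine (Set.finite_range fun g : s → Fin (m + 1) =>
    fun x => if h : x ∈ s then (g ⟨x, h⟩ : ℕ) else 0).subset ?_
  rintro f ⟨hs, hm⟩
  refine ⟨fun x => ⟨f x, Nat.lt_succ_of_le (hm x)⟩, funext fun x => ?_⟩
  by_cases h : x ∈ s <;> simp [h, hs]

theorem card_filter_Icc_ne_zero {T : ℕ × ℕ → ℕ} {r S m : ℕ} (hm : m ≤ S)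
    (h : ∀ c, 1 ≤ c → (T (r, c) ≠ 0 ↔ c ≤ m)) :
    ((Finset.Icc 1 S).filter fun c => T (r, c) ≠ 0).card = m := by
  have hrow : ((Finset.Icc 1 S).filter fun c => T (r, c) ≠ 0) = Finset.Icc 1 m := by
    ext c
    simp only [Finset.mem_filter, Finset.mem_Icc]
    constructor
    · rintro ⟨⟨hc, -⟩, hT⟩
      exact ⟨hc, (h c hc).mp hT⟩
    · rintro ⟨hc, hcm⟩
      exact ⟨⟨hc, hcm.trans hm⟩, (h c hc).mpr hcm⟩
  rw [hrow, Nat.card_Icc, Nat.add_sub_cancel]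

theorem length_wtList (α : List ℕ) (T : ℕ × ℕ → ℕ) : (wtList α T).length = α.length := by
  simp [wtList]

theorem getElem_wtList (α : List ℕ) (T : ℕ × ℕ → ℕ) {k : ℕ} (hk : k < (wtList α T).length) :
    (wtList α T)[k] = ((Finset.Icc 1 α.sum).filter fun c => T (k + 1, c) ≠ 0).card := by
  simp [wtList]

/-- `T` puts, for every `j` and every column `1 ≤ c ≤ α_j`, the entry `j + 1` in row `ρ j c`,
and leaves all other positions empty (`j` is a list index, entries and rows start at `1`). -/
def IsPlacement (α : List ℕ) (ρ : ℕ → ℕ → ℕ) (T : ℕ × ℕ → ℕ) : Prop :=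
  ∀ r c j, T (r, c) = j + 1 ↔ 1 ≤ c ∧ c ≤ α.getD j 0 ∧ ρ j c = r

namespace IsPlacement

variable {α : List ℕ} {ρ : ℕ → ℕ → ℕ} {T : ℕ × ℕ → ℕ}

theorem of_ne_zero (hT : IsPlacement α ρ T) {r c : ℕ} (h : T (r, c) ≠ 0) :
    1 ≤ c ∧ c ≤ α.getD (T (r, c) - 1) 0 ∧ ρ (T (r, c) - 1) c = r :=
  (hT r c _).mp (Nat.succ_pred_eq_of_ne_zero h).symm

theorem ne_zero_iff (hT : IsPlacement α ρ T) {r c : ℕ} :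
    T (r, c) ≠ 0 ↔ ∃ j, 1 ≤ c ∧ c ≤ α.getD j 0 ∧ ρ j c = r := by
  rw [← Nat.pos_iff_ne_zero, ← Nat.exists_eq_add_one]
  exact exists_congr fun j => hT r c j

theorem unique {T' : ℕ × ℕ → ℕ} (hT : IsPlacement α ρ T) (hT' : IsPlacement α ρ T') : T = T' := by
  funext ⟨r, c⟩
  have key : ∀ j, T (r, c) = j + 1 ↔ T' (r, c) = j + 1 := fun j => (hT r c j).trans (hT' r c j).symm
  cases h : T (r, c) with
  | zero =>
    cases h' : T' (r, c) with
    | zero => rfl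
    | succ j =>
      have := (key j).mpr h'
      omega
  | succ j => exact ((key j).mp h).symm

/-- Condition (iv) holds vacuously: by `hmono` a smaller entry never sits below a larger one. -/
theorem isKohnert (hT : IsPlacement α ρ T) (hpos : ∀ j c, 1 ≤ ρ j c) (hle : ∀ j c, ρ j c ≤ j + 1)
    (hanti : ∀ j, Antitone (ρ j)) (hmono : ∀ c, Monotone (ρ · c)) : IsKohnert α T := by
  refine ⟨?_, ?_, ?_, ?_, ?_, ?_⟩
  · intro r c h
    obtain ⟨hc, -, hr⟩ := hT.of_ne_zero h
    exact ⟨hr ▸ hpos _ _, hc⟩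
  · intro r c h
    obtain ⟨hc, hcα, -⟩ := hT.of_ne_zero h
    have := List.lt_length_of_getD_pos (Nat.lt_of_lt_of_le hc hcα)
    omega
  · intro j hj hjℓ c hc
    obtain ⟨k, rfl⟩ := Nat.exists_eq_add_one.mpr hj
    refine ⟨fun hcα => ⟨ρ k c, (hT _ _ _).mpr ⟨hc, hcα, rfl⟩, fun r hr => ?_⟩, fun hcα r hr => ?_⟩
    · exact ((hT _ _ _).mp hr).2.2.symm
    · exact (((hT _ _ _).mp hr).2.1.trans_lt hcα).false
  · intro r c h
    have hr := (hT.of_ne_zero h).2.2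
    have := hle (T (r, c) - 1) c
    omega
  · intro r c r' c' h heq hcc
    have h' : T (r', c') ≠ 0 := heq ▸ h
    rw [← (hT.of_ne_zero h).2.2, ← (hT.of_ne_zero h').2.2, ← heq]
    exact hanti _ hcc.le
  · intro r r' c h h' hlt hrr
    have hr := (hT.of_ne_zero h).2.2
    have hr' := (hT.of_ne_zero h').2.2
    have : ρ (T (r, c) - 1) c ≤ ρ (T (r', c) - 1) c := hmono c (by omega)
    omega

end IsPlacement

theorem isPlacement_basicFilling (α : List ℕ) :
    IsPlacement α (fun j _ => j + 1) (basicFilling α) := by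
  intro r c j
  simp only [basicFilling]
  split_ifs with h
  · constructor
    · rintro rfl
      simpa using h.2.2
    · rintro ⟨-, -, rfl⟩
      rfl
  · refine ⟨fun h0 => h0.elim, ?_⟩
    rintro ⟨hc, hcα, rfl⟩
    have := List.lt_length_of_getD_pos (Nat.lt_of_lt_of_le hc hcα)
    exact h ⟨Nat.le_add_left 1 j, this, hc, by simpa using hcα⟩

theorem isKohnert_basicFilling (α : List ℕ) : IsKohnert α (basicFilling α) :=
  (isPlacement_basicFilling α).isKohnert (fun _ _ => Nat.le_add_left 1 _) (fun _ _ => le_rfl)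
    (fun _ => antitone_const) (fun _ _ _ h => Nat.succ_le_succ h)

theorem wtList_basicFilling (α : List ℕ) : wtList α (basicFilling α) = α := by
  refine List.ext_getElem (length_wtList α _) fun k hk hkα => ?_
  rw [getElem_wtList, ← List.getD_eq_getElem α 0 hkα]
  refine card_filter_Icc_ne_zero (α.getD_le_sum_s13 k) fun c hc => ?_
  rw [(isPlacement_basicFilling α).ne_zero_iff]
  exact ⟨fun ⟨j, _, hcα, hj⟩ => Nat.succ_injective hj ▸ hcα, fun hcα => ⟨k, hc, hcα, rfl⟩⟩

namespace IsKohnert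

variable {α : List ℕ} {T : ℕ × ℕ → ℕ}

theorem apply_eq_of_pairwise (hT : IsKohnert α T) (hs : α.Pairwise (· ≥ ·)) (j : ℕ) {c : ℕ}
    (hc : 1 ≤ c) (hcα : c ≤ α.getD j 0) : T (j + 1, c) = j + 1 := by
  obtain ⟨hpos, -, hcol, hrow, -, -⟩ := hT
  induction j using Nat.strong_induction_on generalizing c with
  | _ j ih =>
    have hjℓ := List.lt_length_of_getD_pos (Nat.lt_of_lt_of_le hc hcα)
    obtain ⟨r, hr, -⟩ := (hcol (j + 1) (by omega) hjℓ c hc).1 hcα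
    have hne : T (r, c) ≠ 0 := by omega
    have hr1 := (hpos r c hne).1
    have hrj := hrow r c hne
    obtain ⟨k, rfl⟩ := Nat.exists_eq_add_one.mpr hr1
    rcases (show k ≤ j by omega).eq_or_lt with rfl | hkj
    · exact hr
    · have := ih k hkj hc (hcα.trans (hs.getD_le_getD hkj.le))
      omega

theorem isPlacement_of_pairwise (hT : IsKohnert α T) (hs : α.Pairwise (· ≥ ·)) :
    IsPlacement α (fun j _ => j + 1) T := by
  intro r c j
  constructor
  · intro hr
    obtain ⟨hpos, hval, hcol, -⟩ := id hT
    have hne : T (r, c) ≠ 0 := by omega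
    have hc := (hpos r c hne).2
    have hjℓ := (hval r c hne).2
    have hcα : c ≤ α.getD j 0 := by
      by_contra! h
      exact (hcol (j + 1) (by omega) (by omega) c hc).2 h r hr
    obtain ⟨_, -, huniq⟩ := (hcol (j + 1) (by omega) (by omega) c hc).1 hcα
    exact ⟨hc, hcα, ((huniq _ (hT.apply_eq_of_pairwise hs j hc hcα)).trans (huniq r hr).symm)⟩
  · rintro ⟨hc, hcα, rfl⟩
    exact hT.apply_eq_of_pairwise hs j hc hcα

theorem mem_of_ne_zero (hT : IsKohnert α T) {r c : ℕ} (h : T (r, c) ≠ 0) :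
    (r, c) ∈ Finset.Icc 1 α.length ×ˢ Finset.Icc 1 α.sum := by
  obtain ⟨hpos, hval, hcol, hrow, -, -⟩ := hT
  obtain ⟨hr, hc⟩ := hpos r c h
  obtain ⟨hj, hjℓ⟩ := hval r c h
  have hcα : c ≤ α.getD (T (r, c) - 1) 0 := by
    by_contra! hcα
    exact (hcol _ hj hjℓ c hc).2 hcα r rfl
  simp only [Finset.mem_product, Finset.mem_Icc]
  exact ⟨⟨hr, (hrow r c h).trans hjℓ⟩, hc, hcα.trans (α.getD_le_sum_s13 _)⟩

end IsKohnert

theorem finite_setOf_isKohnert (α : List ℕ) : {T | IsKohnert α T}.Finite := by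
  refine (Set.finite_setOf_support_subset_of_le
    (Finset.Icc 1 α.length ×ˢ Finset.Icc 1 α.sum) α.length).subset fun T hT => ?_
  refine ⟨fun p hp => by_contra fun h => hp (hT.mem_of_ne_zero h), fun p => ?_⟩
  by_cases h : T p = 0
  · exact h ▸ Nat.zero_le _
  · exact (hT.2.1 p.1 p.2 h).2

theorem keyCoeff_wtList_pos {α : List ℕ} {T : ℕ × ℕ → ℕ} (hT : IsKohnert α T) :
    0 < keyCoeff α (wtList α T) :=
  (Set.ncard_pos ((finite_setOf_isKohnert α).subset fun _ h => h.1)).mpr ⟨T, hT, rfl⟩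

theorem keyCoeff_of_pairwise {α : List ℕ} (hs : α.Pairwise (· ≥ ·)) (b : List ℕ) :
    keyCoeff α b = if b = α then 1 else 0 := by
  have hK : ∀ T, IsKohnert α T ↔ T = basicFilling α := fun T =>
    ⟨fun hT => (hT.isPlacement_of_pairwise hs).unique (isPlacement_basicFilling α),
      fun h => h ▸ isKohnert_basicFilling α⟩
  unfold keyCoeff
  simp only [hK]
  split_ifs with hb
  · refine Set.ncard_eq_one.mpr ⟨basicFilling α, Set.ext fun T => ⟨And.left, fun h => ?_⟩⟩
    exact ⟨h, h ▸ (wtList_basicFilling α).trans hb.symm⟩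
  · convert Set.ncard_empty (ℕ × ℕ → ℕ)
    refine Set.eq_empty_of_forall_notMem fun T ⟨hT, hwt⟩ => hb ?_
    rw [← hwt, hT, wtList_basicFilling]

def ascentRow (α : List ℕ) (i j c : ℕ) : ℕ :=
  if j = i + 1 ∧ α.getD i 0 < c then i + 1 else j + 1

def ascentFilling (α : List ℕ) (i : ℕ) : ℕ × ℕ → ℕ := fun p =>
  if p.1 = i + 1 ∧ α.getD i 0 < p.2 ∧ p.2 ≤ α.getD (i + 1) 0 then i + 2
  else if p.1 = i + 2 ∧ α.getD i 0 < p.2 then 0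
  else basicFilling α p

theorem isPlacement_ascentFilling (α : List ℕ) (i : ℕ) :
    IsPlacement α (ascentRow α i) (ascentFilling α i) := by
  intro r c j
  have hbasic := isPlacement_basicFilling α r c j
  simp only [ascentFilling, ascentRow] at hbasic ⊢
  split_ifs <;> grind

theorem isKohnert_ascentFilling (α : List ℕ) (i : ℕ) : IsKohnert α (ascentFilling α i) := by
  refine (isPlacement_ascentFilling α i).isKohnert (fun j c => ?_) (fun j c => ?_)
    (fun j c c' _ => ?_) (fun c j j' _ => ?_) <;>
    simp only [ascentRow] <;> split_ifs <;> omega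

theorem wtList_ascentFilling_ne {α : List ℕ} {i : ℕ} (hasc : α.getD i 0 < α.getD (i + 1) 0) :
    wtList α (ascentFilling α i) ≠ α := by
  have hiℓ := List.lt_length_of_getD_pos (Nat.zero_lt_of_lt hasc)
  have hrow : ∀ c, 1 ≤ c → (ascentFilling α i (i + 2, c) ≠ 0 ↔ c ≤ α.getD i 0) := by
    intro c hc
    rw [(isPlacement_ascentFilling α i).ne_zero_iff]
    constructor
    · rintro ⟨j, -, hcα, hj⟩
      unfold ascentRow at hj
      split_ifs at hj <;> omega
    · intro hcα
      refine ⟨i + 1, hc, by omega, ?_⟩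
      unfold ascentRow
      rw [if_neg (by omega)]
  intro h
  have hcount := getElem_wtList α (ascentFilling α i) (k := i + 1) (by simpa [length_wtList])
  rw [card_filter_Icc_ne_zero (α.getD_le_sum_s13 i) hrow] at hcount
  simp only [h, ← List.getD_eq_getElem α 0 hiℓ] at hcount
  omega

/-- for a strong composition `α`, `κ_α = 𝔉_α` iff `α` is a partition
(weakly decreasing). -/
theorem stmt13 (α : List ℕ) (hpos : ∀ x ∈ α, 0 < x) :
    (∀ b : List ℕ, keyCoeff α b = fundCoeff α b) ↔ List.Pairwise (· ≥ ·) α := by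
  refine ⟨fun hcoeff => ?_, fun hs b => by rw [keyCoeff_of_pairwise hs, fundCoeff_eq_ite hpos]⟩
  by_contra hs
  obtain ⟨i, hasc⟩ := List.exists_getD_lt_getD_succ_of_not_pairwise hs
  have hkey := keyCoeff_wtList_pos (isKohnert_ascentFilling α i)
  rw [hcoeff, fundCoeff_eq_ite hpos, if_neg (wtList_ascentFilling_ne hasc)] at hkey
  exact hkey.false
end

section
/- If a strong composition α = (α₁,...,α_ℓ) contains indices i < j < k with α_i < α_j < α_k, then there exist two distinct quasi-Yamanouchi Kohnert tableaux of content α having the same weight; hence κ_α is not multiplicity free as a sum of fundamental slide polynomials. -/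
structure Ctx where
  A : ℕ → ℕ
  L : ℕ
  I : ℕ
  J : ℕ
  K : ℕ
  hI : 1 ≤ I
  hIJ : I < J
  hJK : J < K
  hKL : K ≤ L
  hpq : A I < A J
  hqs : A J < A K
  hmid : ∀ r, J < r → r < K → A r ≤ A J
  hposA : ∀ r, 1 ≤ r → r ≤ L → 1 ≤ A r

namespace Ctx
variable (C : Ctx)

def posRow (t : Bool) (v c : ℕ) : ℕ :=
  if v = C.K then (if c < C.A C.K then C.K else if t = true then C.J else C.J - 1)
  else if v = C.J then (if C.A C.J ≤ c then (if t = true then C.J - 1 else C.J) else C.J)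
  else if C.I ≤ v ∧ v < C.J then (if c ≤ C.A C.I then v else v - 1)
  else v

def fill (t : Bool) : ℕ × ℕ → ℕ := fun x =>
  if 1 ≤ x.1 ∧ x.1 ≤ C.L ∧ 1 ≤ x.2 then
    if x.2 ≤ C.A C.K ∧ C.posRow t C.K x.2 = x.1 then C.K
    else if x.2 ≤ C.A C.J ∧ C.posRow t C.J x.2 = x.1 then C.J
    else if x.1 + 1 ≤ C.L ∧ x.2 ≤ C.A (x.1 + 1) ∧ C.posRow t (x.1 + 1) x.2 = x.1 then x.1 + 1
    else if x.2 ≤ C.A x.1 ∧ C.posRow t x.1 x.2 = x.1 then x.1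
    else 0
  else 0

lemma posRow_le (t : Bool) (v c : ℕ) : C.posRow t v c ≤ v := by
  have h1 := C.hI; have h2 := C.hIJ; have h3 := C.hJK
  unfold posRow; split_ifs <;> omega

lemma posRow_pos (t : Bool) {v c : ℕ} (hv : 1 ≤ v) (hc : c ≤ C.A v) :
    1 ≤ C.posRow t v c := by
  have h1 := C.hI; have h2 := C.hIJ; have h3 := C.hJK
  rcases eq_or_ne v C.I with rfl | hvI
  · unfold posRow; split_ifs <;> omega
  · unfold posRow; split_ifs <;> omega

set_option maxHeartbeats 2000000 in
lemma posRow_inj (t : Bool) {v v' c : ℕ} (hv : 1 ≤ v) (hv' : 1 ≤ v')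
    (hc : c ≤ C.A v) (hc' : c ≤ C.A v')
    (h : C.posRow t v c = C.posRow t v' c) : v = v' := by
  have h1 := C.hI; have h2 := C.hIJ; have h3 := C.hJK
  have h4 := C.hpq; have h5 := C.hqs
  rcases eq_or_ne v C.I with rfl | h6 <;> rcases eq_or_ne v' C.I with rfl | h7 <;>
    (unfold posRow at h; split_ifs at h <;> first | omega | (subst_vars; omega))

lemma posRow_antitone (t : Bool) {v c c' : ℕ} (h : c ≤ c') :
    C.posRow t v c' ≤ C.posRow t v c := by
  have h1 := C.hI; have h2 := C.hIJ; have h3 := C.hJK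
  unfold posRow; split_ifs <;> omega

lemma posRow_lb (t : Bool) (v c : ℕ) :
    v - 1 ≤ C.posRow t v c ∨ (v = C.K ∧ C.A C.K ≤ c) := by
  have h1 := C.hI; have h2 := C.hIJ; have h3 := C.hJK
  unfold posRow; split_ifs <;> omega

lemma posRow_K_ge (t : Bool) {c : ℕ} (h : C.A C.K ≤ c) :
    C.J - 1 ≤ C.posRow t C.K c ∧ C.posRow t C.K c ≤ C.J := by
  have h1 := C.hI; have h2 := C.hIJ; have h3 := C.hJK
  unfold posRow; split_ifs <;> omega

lemma posRow_one (t : Bool) {v : ℕ} (hv : 1 ≤ v) (hvL : v ≤ C.L) :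
    C.posRow t v 1 = v := by
  have h1 := C.hI; have h2 := C.hIJ; have h3 := C.hJK
  have h4 := C.hpq; have h5 := C.hqs
  have h6 : 1 ≤ C.A C.I := C.hposA C.I C.hI
    (by have := C.hIJ; have := C.hJK; have := C.hKL; omega)
  have h7 := C.hKL
  unfold posRow; split_ifs <;> omega

lemma posRow_vals (t : Bool) {v c : ℕ} (hK : v ≠ C.K) (hJ : v ≠ C.J) :
    C.posRow t v c = v ∨ C.posRow t v c + 1 = v := by
  have h1 := C.hI; have h2 := C.hIJ; have h3 := C.hJK
  unfold posRow; split_ifs <;> omega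

lemma fill_posRow (t : Bool) {v c : ℕ} (hv : 1 ≤ v) (hvL : v ≤ C.L)
    (hc : 1 ≤ c) (hcA : c ≤ C.A v) :
    C.fill t (C.posRow t v c, c) = v := by
  have h1 := C.hI; have h2 := C.hIJ; have h3 := C.hJK; have h4 := C.hKL
  have hKv : 1 ≤ C.K := by omega
  have hJv : 1 ≤ C.J := by omega
  have houter : 1 ≤ C.posRow t v c ∧ C.posRow t v c ≤ C.L ∧ 1 ≤ c :=
    ⟨C.posRow_pos t hv hcA, le_trans (C.posRow_le t v c) hvL, hc⟩
  simp only [fill]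
  rw [if_pos houter]
  by_cases hKb : c ≤ C.A C.K ∧ C.posRow t C.K c = C.posRow t v c
  · rw [if_pos hKb]
    exact C.posRow_inj t hKv hv hKb.1 hcA hKb.2
  · rw [if_neg hKb]
    by_cases hJb : c ≤ C.A C.J ∧ C.posRow t C.J c = C.posRow t v c
    · rw [if_pos hJb]
      exact C.posRow_inj t hJv hv hJb.1 hcA hJb.2
    · rw [if_neg hJb]
      have hvK : v ≠ C.K := fun h => hKb (by subst h; exact ⟨hcA, rfl⟩)
      have hvJ : v ≠ C.J := fun h => hJb (by subst h; exact ⟨hcA, rfl⟩)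
      rcases C.posRow_vals t (c := c) hvK hvJ with he | he
      · by_cases h3b : C.posRow t v c + 1 ≤ C.L ∧ c ≤ C.A (C.posRow t v c + 1) ∧
            C.posRow t (C.posRow t v c + 1) c = C.posRow t v c
        · have := C.posRow_inj t (by omega) hv h3b.2.1 hcA h3b.2.2
          omega
        · rw [if_neg h3b, if_pos (by rw [he]; exact ⟨hcA, he⟩)]
          exact he
      · rw [if_pos (by rw [he]; exact ⟨hvL, hcA, rfl⟩)]
        exact he

lemma fill_inv (t : Bool) {r c v : ℕ} (h : C.fill t (r, c) = v) (hv : v ≠ 0) :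
    1 ≤ v ∧ v ≤ C.L ∧ 1 ≤ c ∧ c ≤ C.A v ∧ C.posRow t v c = r ∧ 1 ≤ r ∧ r ≤ C.L := by
  have h1 := C.hI; have h2 := C.hIJ; have h3 := C.hJK; have h4 := C.hKL
  unfold fill at h
  split_ifs at h with h0 hb1 hb2 hb3 hb4
  · subst h; exact ⟨by omega, by omega, h0.2.2, hb1.1, hb1.2, h0.1, h0.2.1⟩
  · subst h; exact ⟨by omega, by omega, h0.2.2, hb2.1, hb2.2, h0.1, h0.2.1⟩
  · subst h; exact ⟨by omega, hb3.1, h0.2.2, hb3.2.1, hb3.2.2, h0.1, h0.2.1⟩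
  · subst h; exact ⟨h0.1, h0.2.1, h0.2.2, hb4.1, hb4.2, h0.1, h0.2.1⟩
  · exact absurd h.symm hv
  · exact absurd h.symm hv

lemma fill_inv' (t : Bool) {x : ℕ × ℕ} (h : C.fill t x ≠ 0) :
    1 ≤ C.fill t x ∧ C.fill t x ≤ C.L ∧ 1 ≤ x.2 ∧ x.2 ≤ C.A (C.fill t x) ∧
      C.posRow t (C.fill t x) x.2 = x.1 ∧ 1 ≤ x.1 ∧ x.1 ≤ C.L := by
  obtain ⟨a, b⟩ := x
  exact C.fill_inv t rfl h

lemma fill_invrc (t : Bool) {r c : ℕ} (h : C.fill t (r, c) ≠ 0) :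
    1 ≤ C.fill t (r, c) ∧ C.fill t (r, c) ≤ C.L ∧ 1 ≤ c ∧
      c ≤ C.A (C.fill t (r, c)) ∧ C.posRow t (C.fill t (r, c)) c = r ∧ 1 ≤ r ∧ r ≤ C.L :=
  C.fill_inv t rfl h

lemma isQY (a : List ℕ) (hA : ∀ r, C.A r = a.getD (r - 1) 0) (hL : C.L = a.length)
    (t : Bool) : IsQYKohnert a (C.fill t) := by
  constructor
  · refine ⟨?_, ?_, ?_, ?_, ?_, ?_⟩
    · intro r c h
      have h' := C.fill_invrc t h
      exact ⟨h'.2.2.2.2.2.1, h'.2.2.1⟩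
    · intro r c h
      have h' := C.fill_invrc t h
      exact ⟨h'.1, hL ▸ h'.2.1⟩
    · intro i h1 h2 c hc
      constructor
      · intro hle
        have hle' : c ≤ C.A i := by rw [hA]; exact hle
        refine ⟨C.posRow t i c, C.fill_posRow t h1 (hL ▸ h2) hc hle', ?_⟩
        intro y hy
        exact (C.fill_inv t hy (by omega)).2.2.2.2.1.symm
      · intro hgt r hr
        have h' := (C.fill_inv t hr (by omega)).2.2.2.1
        rw [hA] at h'; omega
    · intro r c h
      have h' := C.fill_invrc t h
      have h2 := C.posRow_le t (C.fill t (r, c)) c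
      omega
    · intro r c r' c' h he hcc
      have e1 := (C.fill_invrc t h).2.2.2.2.1
      have e2 := (C.fill_inv t he.symm h).2.2.2.2.1
      have e3 := C.posRow_antitone (t := t) (v := C.fill t (r, c)) (le_of_lt hcc)
      omega
    · intro r r' c hA0 hB0 hlt hrr
      exfalso
      have invA := C.fill_invrc t hA0
      have invB := C.fill_invrc t hB0
      have hlA := C.posRow_le t (C.fill t (r, c)) c
      rcases C.posRow_lb t (C.fill t (r', c)) c with hb | ⟨hbK, hbc⟩
      · omega
      · rw [hbK] at invB hlt
        have hKg := C.posRow_K_ge (t := t) (c := c) hbc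
        have hqs := C.hqs
        rcases lt_trichotomy (C.fill t (r, c)) C.J with hv | hv | hv
        · omega
        · have := invA.2.2.2.1
          rw [hv] at this
          omega
        · have := C.hmid (C.fill t (r, c)) hv (by omega)
          omega
  · intro r hr hne
    left
    obtain ⟨c, hc⟩ := hne
    have hinv := C.fill_invrc t hc
    have hrL : r ≤ C.L := hinv.2.2.2.2.2.2
    have h1A : 1 ≤ C.A r := C.hposA r hr hrL
    refine ⟨1, ?_⟩
    have h2 := C.fill_posRow t hr hrL le_rfl h1A
    rwa [C.posRow_one t hr hrL] at h2

lemma posRow_tt (t t' : Bool) (v c : ℕ) :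
    C.posRow t v c = C.posRow t' v c ∨
      (C.J - 1 ≤ C.posRow t v c ∧ C.posRow t v c ≤ C.J ∧
       C.J - 1 ≤ C.posRow t' v c ∧ C.posRow t' v c ≤ C.J) := by
  have h1 := C.hI; have h2 := C.hIJ; have h3 := C.hJK
  unfold posRow; split_ifs <;> omega

lemma fill_switch (t t' : Bool) {r c : ℕ} (hJ : r ≠ C.J) (hJ1 : r ≠ C.J - 1)
    (h : C.fill t (r, c) ≠ 0) : C.fill t' (r, c) = C.fill t (r, c) := by
  have hinv := C.fill_invrc t h
  rcases C.posRow_tt t t' (C.fill t (r, c)) c with he | he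
  · have h2 := C.fill_posRow t' hinv.1 hinv.2.1 hinv.2.2.1 hinv.2.2.2.1
    rw [← he, hinv.2.2.2.2.1] at h2
    exact h2
  · exfalso
    have := hinv.2.2.2.2.1
    omega

lemma fill_eq_of_row_ne (t t' : Bool) {r c : ℕ} (hJ : r ≠ C.J) (hJ1 : r ≠ C.J - 1) :
    C.fill t (r, c) = C.fill t' (r, c) := by
  by_cases h : C.fill t (r, c) = 0
  · by_cases h' : C.fill t' (r, c) = 0
    · rw [h, h']
    · exact (C.fill_switch t' t hJ hJ1 h')
  · exact (C.fill_switch t t' hJ hJ1 h).symm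

lemma row_forward (t : Bool) {r c : ℕ} (h : C.fill t (r, c) ≠ 0) :
    ∃ v, 1 ≤ v ∧ v ≤ C.L ∧ 1 ≤ c ∧ c ≤ C.A v ∧ C.posRow t v c = r :=
  ⟨C.fill t (r, c), (C.fill_invrc t h).1, (C.fill_invrc t h).2.1, (C.fill_invrc t h).2.2.1,
    (C.fill_invrc t h).2.2.2.1, (C.fill_invrc t h).2.2.2.2.1⟩

lemma rowJ_true (c : ℕ) :
    C.fill true (C.J, c) ≠ 0 ↔ (1 ≤ c ∧ c + 1 ≤ C.A C.J) ∨ c = C.A C.K := by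
  have h1 := C.hI; have h2 := C.hIJ; have h3 := C.hJK; have h4 := C.hKL
  have h5 := C.hpq; have h6 := C.hqs
  have h7 : 1 ≤ C.A C.I := C.hposA C.I C.hI (by omega)
  constructor
  · intro h
    obtain ⟨v, hv1, hvL, hc1, hcA, hp⟩ := C.row_forward true h
    unfold posRow at hp
    split_ifs at hp <;> first | omega | (subst_vars; omega) | simp_all
  · rintro (⟨hc1, hcJ⟩ | rfl)
    · have hp : C.posRow true C.J c = C.J := by
        unfold posRow; split_ifs <;> first | omega | simp_all
      have := C.fill_posRow true (v := C.J) (c := c) (by omega) (by omega) hc1 (by omega)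
      rw [hp] at this
      omega
    · have hp : C.posRow true C.K (C.A C.K) = C.J := by
        unfold posRow; split_ifs <;> first | omega | simp_all
      have := C.fill_posRow true (v := C.K) (c := C.A C.K) (by omega) (by omega)
        (by omega) le_rfl
      rw [hp] at this
      omega

lemma rowJ_false (c : ℕ) :
    C.fill false (C.J, c) ≠ 0 ↔ (1 ≤ c ∧ c ≤ C.A C.J) := by
  have h1 := C.hI; have h2 := C.hIJ; have h3 := C.hJK; have h4 := C.hKL
  have h5 := C.hpq; have h6 := C.hqs
  have h7 : 1 ≤ C.A C.I := C.hposA C.I C.hI (by omega)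
  constructor
  · intro h
    obtain ⟨v, hv1, hvL, hc1, hcA, hp⟩ := C.row_forward false h
    unfold posRow at hp
    split_ifs at hp <;> first | omega | (subst_vars; omega) | simp_all
  · rintro ⟨hc1, hcJ⟩
    have hp : C.posRow false C.J c = C.J := by
      unfold posRow; split_ifs <;> first | omega | simp_all
    have := C.fill_posRow false (v := C.J) (c := c) (by omega) (by omega) hc1 (by omega)
    rw [hp] at this
    omega

lemma rowJ1_true (c : ℕ) :
    C.fill true (C.J - 1, c) ≠ 0 ↔
      (1 ≤ c ∧ c ≤ C.A C.I ∧ c ≤ C.A (C.J - 1)) ∨ c = C.A C.J := by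
  have h1 := C.hI; have h2 := C.hIJ; have h3 := C.hJK; have h4 := C.hKL
  have h5 := C.hpq; have h6 := C.hqs
  have h7 : 1 ≤ C.A C.I := C.hposA C.I C.hI (by omega)
  constructor
  · intro h
    obtain ⟨v, hv1, hvL, hc1, hcA, hp⟩ := C.row_forward true h
    unfold posRow at hp
    split_ifs at hp <;> first | omega | (subst_vars; omega) | simp_all
  · rintro (⟨hc1, hcI, hcJ1⟩ | rfl)
    · have hp : C.posRow true (C.J - 1) c = C.J - 1 := by
        unfold posRow; split_ifs <;> first | omega | simp_all
      have := C.fill_posRow true (v := C.J - 1) (c := c) (by omega) (by omega) hc1 hcJ1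
      rw [hp] at this
      omega
    · have hp : C.posRow true C.J (C.A C.J) = C.J - 1 := by
        unfold posRow; split_ifs <;> first | omega | simp_all
      have := C.fill_posRow true (v := C.J) (c := C.A C.J) (by omega) (by omega)
        (by omega) le_rfl
      rw [hp] at this
      omega

lemma rowJ1_false (c : ℕ) :
    C.fill false (C.J - 1, c) ≠ 0 ↔
      (1 ≤ c ∧ c ≤ C.A C.I ∧ c ≤ C.A (C.J - 1)) ∨ c = C.A C.K := by
  have h1 := C.hI; have h2 := C.hIJ; have h3 := C.hJK; have h4 := C.hKL
  have h5 := C.hpq; have h6 := C.hqs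
  have h7 : 1 ≤ C.A C.I := C.hposA C.I C.hI (by omega)
  constructor
  · intro h
    obtain ⟨v, hv1, hvL, hc1, hcA, hp⟩ := C.row_forward false h
    unfold posRow at hp
    split_ifs at hp <;> first | omega | (subst_vars; omega) | simp_all
  · rintro (⟨hc1, hcI, hcJ1⟩ | rfl)
    · have hp : C.posRow false (C.J - 1) c = C.J - 1 := by
        unfold posRow; split_ifs <;> first | omega | simp_all
      have := C.fill_posRow false (v := C.J - 1) (c := c) (by omega) (by omega) hc1 hcJ1
      rw [hp] at this
      omega
    · have hp : C.posRow false C.K (C.A C.K) = C.J - 1 := by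
        unfold posRow; split_ifs <;> first | omega | simp_all
      have := C.fill_posRow false (v := C.K) (c := C.A C.K) (by omega) (by omega)
        (by omega) le_rfl
      rw [hp] at this
      omega

lemma fill_ne : C.fill true ≠ C.fill false := by
  have h1 := C.hI; have h2 := C.hIJ; have h3 := C.hJK; have h4 := C.hKL
  have h5 := C.hpq; have h6 := C.hqs
  intro h
  have ha : C.fill true (C.J, C.A C.K) ≠ 0 := (C.rowJ_true _).mpr (Or.inr rfl)
  have hb : ¬ C.fill false (C.J, C.A C.K) ≠ 0 := by
    rw [C.rowJ_false]
    omega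
  rw [h] at ha
  exact hb ha

lemma wt_eq (a : List ℕ) (hA : ∀ r, C.A r = a.getD (r - 1) 0) (hL : C.L = a.length)
    (hsJ : C.A C.J ≤ a.sum) (hsK : C.A C.K ≤ a.sum) :
    wtList a (C.fill true) = wtList a (C.fill false) := by
  have h1 := C.hI; have h2 := C.hIJ; have h3 := C.hJK; have h4 := C.hKL
  have h5 := C.hpq; have h6 := C.hqs
  have h7 : 1 ≤ C.A C.I := C.hposA C.I C.hI (by omega)
  unfold wtList
  apply List.map_congr_left
  intro rr _
  by_cases hrJ : rr + 1 = C.J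
  · rw [hrJ]
    have e1 : (Finset.Icc 1 a.sum).filter (fun c => C.fill true (C.J, c) ≠ 0) =
        insert (C.A C.K) (Finset.Icc 1 (C.A C.J - 1)) := by
      ext c
      simp only [Finset.mem_filter, Finset.mem_Icc, Finset.mem_insert, C.rowJ_true]
      omega
    have e2 : (Finset.Icc 1 a.sum).filter (fun c => C.fill false (C.J, c) ≠ 0) =
        Finset.Icc 1 (C.A C.J) := by
      ext c
      simp only [Finset.mem_filter, Finset.mem_Icc, C.rowJ_false]
      omega
    rw [e1, e2, Finset.card_insert_of_notMem (by simp only [Finset.mem_Icc]; omega),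
      Nat.card_Icc, Nat.card_Icc]
    omega
  · by_cases hrJ1 : rr + 1 = C.J - 1
    · rw [hrJ1]
      have e1 : (Finset.Icc 1 a.sum).filter (fun c => C.fill true (C.J - 1, c) ≠ 0) =
          insert (C.A C.J) (Finset.Icc 1 (min (C.A C.I) (C.A (C.J - 1)))) := by
        ext c
        simp only [Finset.mem_filter, Finset.mem_Icc, Finset.mem_insert, C.rowJ1_true]
        omega
      have e2 : (Finset.Icc 1 a.sum).filter (fun c => C.fill false (C.J - 1, c) ≠ 0) =
          insert (C.A C.K) (Finset.Icc 1 (min (C.A C.I) (C.A (C.J - 1)))) := by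
        ext c
        simp only [Finset.mem_filter, Finset.mem_Icc, Finset.mem_insert, C.rowJ1_false]
        omega
      rw [e1, e2, Finset.card_insert_of_notMem (by simp only [Finset.mem_Icc]; omega),
        Finset.card_insert_of_notMem (by simp only [Finset.mem_Icc]; omega)]
    · have he : ∀ c, C.fill true (rr + 1, c) = C.fill false (rr + 1, c) :=
        fun c => C.fill_eq_of_row_ne true false hrJ hrJ1
      simp only [he]

end Ctx


/-- if a strong composition contains `i < j < k` with `αᵢ < αⱼ < αₖ`,
then two distinct quasi-Yamanouchi Kohnert tableaux of content `α` share a weight,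
so `κ_α` is not multiplicity free. -/
theorem stmt16 (α : List ℕ) (hpos : ∀ x ∈ α, 0 < x)
    (i j k : Fin α.length) (hij : i < j) (hjk : j < k)
    (h1 : α.get i < α.get j) (h2 : α.get j < α.get k) :
    ∃ T₁ T₂ : ℕ × ℕ → ℕ, IsQYKohnert α T₁ ∧ IsQYKohnert α T₂ ∧
      T₁ ≠ T₂ ∧ wtList α T₁ = wtList α T₂ := by
  classical
  have hgd : ∀ m : Fin α.length, α.get m = α.getD m.1 0 := by
    intro m
    rw [List.get_eq_getElem, List.getD_eq_getElem α 0 m.2]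
  have hex : ∃ n, j.1 < n ∧ n < α.length ∧ α.getD j.1 0 < α.getD n 0 :=
    ⟨k.1, hjk, k.2, by rw [← hgd j, ← hgd k]; exact h2⟩
  have hspec := Nat.find_spec hex
  have hposA : ∀ r, 1 ≤ r → r ≤ α.length → 1 ≤ α.getD (r - 1) 0 := by
    intro r hr1 hrL
    rw [List.getD_eq_getElem α 0 (by omega)]
    exact hpos _ (List.getElem_mem _)
  have hij' : i.1 < j.1 := hij
  set C : Ctx :=
    { A := fun r => α.getD (r - 1) 0
      L := α.length
      I := i.1 + 1
      J := j.1 + 1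
      K := Nat.find hex + 1
      hI := by omega
      hIJ := by omega
      hJK := by omega
      hKL := by omega
      hpq := by
        simp only [Nat.add_sub_cancel]
        rw [← hgd i, ← hgd j]
        exact h1
      hqs := by
        simp only [Nat.add_sub_cancel]
        exact hspec.2.2
      hmid := by
        intro r hr1 hr2
        have hm := Nat.find_min hex (m := r - 1) (by omega)
        simp only [not_and, not_lt] at hm
        simp only [Nat.add_sub_cancel]
        exact hm (by omega) (by omega)
      hposA := hposA } with hC
  have hsJ : C.A C.J ≤ α.sum := by
    show α.getD (j.1 + 1 - 1) 0 ≤ α.sum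
    simp only [Nat.add_sub_cancel]
    rw [List.getD_eq_getElem α 0 j.2]
    exact List.single_le_sum (fun x _ => Nat.zero_le x) _ (List.getElem_mem _)
  have hsK : C.A C.K ≤ α.sum := by
    show α.getD (Nat.find hex + 1 - 1) 0 ≤ α.sum
    simp only [Nat.add_sub_cancel]
    rw [List.getD_eq_getElem α 0 hspec.2.1]
    exact List.single_le_sum (fun x _ => Nat.zero_le x) _ (List.getElem_mem _)
  exact ⟨C.fill true, C.fill false,
    C.isQY α (fun r => rfl) rfl true,
    C.isQY α (fun r => rfl) rfl false,
    C.fill_ne,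
    C.wt_eq α (fun r => rfl) rfl hsJ hsK⟩
end

section
/- If α is a strong composition such that κ_α is not multiplicity free (there exist two distinct quasi-Yamanouchi Kohnert tableaux of content α with equal weight), and a is any weak composition with flat(a) = α, then κ_a is not multiplicity free. -/
/-!
Inserting an empty row at height `k + 1` into a Kohnert tableau, and shifting every row above it
and every entry larger than `k` up by one, turns a Kohnert tableau of content `u ++ v` with
`u.length = k` into one of content `u ++ 0 :: v`, with the same row lengths apart from the new
empty row. This is injective, so colliding pairs of tableaux of content `flat(a)` yield colliding
pairs of content `a`. Quasi-Yamanouchiness is not preserved in general, but for a strong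
composition every Kohnert tableau has first column `1, 2, …, ℓ`, so every nonempty row `r`
contains `r`; this stronger property does survive the insertion and implies condition (v).
-/

def bump (k x : ℕ) : ℕ := if x ≤ k then x else x + 1

section Bump

variable {k x y : ℕ}

@[simp] lemma bump_eq_zero : bump k x = 0 ↔ x = 0 := by unfold bump; split <;> omega

@[simp] lemma bump_zero : bump k 0 = 0 := by simp [bump]

@[simp] lemma bump_le_bump : bump k x ≤ bump k y ↔ x ≤ y := by
  unfold bump; split <;> split <;> omega

@[simp] lemma bump_lt_bump : bump k x < bump k y ↔ x < y := by
  unfold bump; split <;> split <;> omega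

lemma bump_injective : Function.Injective (bump k) := fun x y h => by
  unfold bump at h; split at h <;> split at h <;> omega

@[simp] lemma bump_inj : bump k x = bump k y ↔ x = y := bump_injective.eq_iff

lemma bump_ne_succ : bump k x ≠ k + 1 := by unfold bump; split <;> omega

lemma le_bump : x ≤ bump k x := by unfold bump; split <;> omega

lemma bump_le_succ_iff (n : ℕ) (hk : k ≤ n) : bump k x ≤ n + 1 ↔ x ≤ n := by
  unfold bump; split <;> omega

lemma eq_succ_or_exists_bump (y : ℕ) : y = k + 1 ∨ ∃ x, bump k x = y := by
  rcases lt_trichotomy y (k + 1) with h | h | h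
  · exact Or.inr ⟨y, by unfold bump; split <;> omega⟩
  · exact Or.inl h
  · exact Or.inr ⟨y - 1, by unfold bump; split <;> omega⟩

end Bump

/-- Insert an empty row `k + 1` into the filling `T`, relabelling rows and entries by `bump k`. -/
def insertRow (k : ℕ) (T : ℕ × ℕ → ℕ) : ℕ × ℕ → ℕ := fun p =>
  if p.1 ≤ k then bump k (T p) else if p.1 = k + 1 then 0 else bump k (T (p.1 - 1, p.2))

section InsertRow

variable {k : ℕ} {T : ℕ × ℕ → ℕ}

@[simp] lemma insertRow_bump (r c : ℕ) : insertRow k T (bump k r, c) = bump k (T (r, c)) := by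
  unfold insertRow bump
  split_ifs <;> first | rfl | omega | simp_all

@[simp] lemma insertRow_succ (c : ℕ) : insertRow k T (k + 1, c) = 0 := by
  simp [insertRow]

lemma exists_bump_of_insertRow_ne_zero {r c : ℕ} (h : insertRow k T (r, c) ≠ 0) :
    ∃ r', bump k r' = r ∧ T (r', c) ≠ 0 := by
  rcases eq_succ_or_exists_bump (k := k) r with rfl | ⟨r', rfl⟩
  · simp at h
  · exact ⟨r', rfl, by simpa using h⟩

lemma insertRow_injective (k : ℕ) : Function.Injective (insertRow k) := fun T₁ T₂ h => by
  funext ⟨r, c⟩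
  simpa using congrFun h (bump k r, c)

lemma insertRow_eq_bump_iff {r c i : ℕ} (hi : i ≠ 0) :
    insertRow k T (r, c) = bump k i ↔ ∃ r', bump k r' = r ∧ T (r', c) = i := by
  rcases eq_succ_or_exists_bump (k := k) r with rfl | ⟨r, rfl⟩
  · simp only [insertRow_succ, eq_comm (a := 0), bump_eq_zero, hi, false_iff, not_exists,
      not_and]
    exact fun r' h => absurd h bump_ne_succ
  · simp

end InsertRow

section KohnertConditions

variable {k : ℕ} {T : ℕ × ℕ → ℕ}

lemma insertRow_cells_pos (h : ∀ r c, T (r, c) ≠ 0 → 1 ≤ r ∧ 1 ≤ c) :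
    ∀ r c, insertRow k T (r, c) ≠ 0 → 1 ≤ r ∧ 1 ≤ c := by
  intro r c hc
  obtain ⟨r, rfl, hTc⟩ := exists_bump_of_insertRow_ne_zero hc
  exact ⟨(h r c hTc).1.trans le_bump, (h r c hTc).2⟩

lemma insertRow_entries_bounded {n : ℕ} (hk : k ≤ n)
    (h : ∀ r c, T (r, c) ≠ 0 → 1 ≤ T (r, c) ∧ T (r, c) ≤ n) :
    ∀ r c, insertRow k T (r, c) ≠ 0 → 1 ≤ insertRow k T (r, c) ∧ insertRow k T (r, c) ≤ n + 1 := by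
  intro r c hc
  obtain ⟨r, rfl, hTc⟩ := exists_bump_of_insertRow_ne_zero hc
  rw [insertRow_bump]
  exact ⟨(h r c hTc).1.trans le_bump, (bump_le_succ_iff n hk).2 (h r c hTc).2⟩

lemma insertRow_row_le_entry (h : ∀ r c, T (r, c) ≠ 0 → r ≤ T (r, c)) :
    ∀ r c, insertRow k T (r, c) ≠ 0 → r ≤ insertRow k T (r, c) := by
  intro r c hc
  obtain ⟨r, rfl, hTc⟩ := exists_bump_of_insertRow_ne_zero hc
  simpa using h r c hTc

lemma insertRow_entries_descend
    (h : ∀ r c r' c', T (r, c) ≠ 0 → T (r, c) = T (r', c') → c < c' → r' ≤ r) :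
    ∀ r c r' c', insertRow k T (r, c) ≠ 0 → insertRow k T (r, c) = insertRow k T (r', c') →
      c < c' → r' ≤ r := by
  intro r c r' c' hc he hcc
  have hc' : insertRow k T (r', c') ≠ 0 := he ▸ hc
  obtain ⟨r, rfl, hTc⟩ := exists_bump_of_insertRow_ne_zero hc
  obtain ⟨r', rfl, -⟩ := exists_bump_of_insertRow_ne_zero hc'
  simp only [insertRow_bump, bump_inj] at he
  simpa using h r c r' c' hTc he hcc

lemma insertRow_next_column
    (h : ∀ r r' c, T (r, c) ≠ 0 → T (r', c) ≠ 0 → T (r, c) < T (r', c) → r' < r →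
      ∃ r'', r' < r'' ∧ T (r'', c + 1) = T (r, c)) :
    ∀ r r' c, insertRow k T (r, c) ≠ 0 → insertRow k T (r', c) ≠ 0 →
      insertRow k T (r, c) < insertRow k T (r', c) → r' < r →
      ∃ r'', r' < r'' ∧ insertRow k T (r'', c + 1) = insertRow k T (r, c) := by
  intro r r' c hc hc' hlt hrr
  obtain ⟨r, rfl, hTc⟩ := exists_bump_of_insertRow_ne_zero hc
  obtain ⟨r', rfl, hTc'⟩ := exists_bump_of_insertRow_ne_zero hc'
  simp only [insertRow_bump, bump_lt_bump] at hlt hrr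
  obtain ⟨r'', hr'r'', hr''⟩ := h r r' c hTc hTc' hlt hrr
  exact ⟨bump k r'', bump_lt_bump.2 hr'r'', by simp [hr'']⟩

end KohnertConditions

section InsertZero

variable (u v : List ℕ)

lemma length_append_zero_cons : (u ++ 0 :: v).length = (u ++ v).length + 1 := by
  simp only [List.length_append, List.length_cons]
  omega

lemma getD_append_zero_cons_length : (u ++ 0 :: v).getD u.length 0 = 0 := by
  simp [List.getD_eq_getElem?_getD]

lemma getD_append_zero_cons_bump (j : ℕ) :
    (u ++ 0 :: v).getD (bump u.length (j + 1) - 1) 0 = (u ++ v).getD j 0 := by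
  simp only [List.getD_eq_getElem?_getD, bump]
  rcases lt_or_ge j u.length with hj | hj
  · rw [if_pos (by omega), Nat.add_sub_cancel, List.getElem?_append_left hj,
      List.getElem?_append_left hj]
  · rw [if_neg (by omega), show j + 1 + 1 - 1 = j + 1 by omega,
      List.getElem?_append_right (by omega), List.getElem?_append_right hj,
      show j + 1 - u.length = (j - u.length) + 1 by omega, List.getElem?_cons_succ]

variable {u v} {T : ℕ × ℕ → ℕ}

lemma insertRow_content
    (h : ∀ i, 1 ≤ i → i ≤ (u ++ v).length → ∀ c, 1 ≤ c →
      (c ≤ (u ++ v).getD (i - 1) 0 → ∃! r, T (r, c) = i) ∧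
      ((u ++ v).getD (i - 1) 0 < c → ∀ r, T (r, c) ≠ i)) :
    ∀ i, 1 ≤ i → i ≤ (u ++ 0 :: v).length → ∀ c, 1 ≤ c →
      (c ≤ (u ++ 0 :: v).getD (i - 1) 0 → ∃! r, insertRow u.length T (r, c) = i) ∧
      ((u ++ 0 :: v).getD (i - 1) 0 < c → ∀ r, insertRow u.length T (r, c) ≠ i) := by
  intro i hi hil c hc
  rw [length_append_zero_cons] at hil
  rcases eq_succ_or_exists_bump (k := u.length) i with rfl | ⟨i, rfl⟩
  · rw [Nat.add_sub_cancel, getD_append_zero_cons_length]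
    refine ⟨fun hc0 => absurd hc0 (by omega), fun _ r => ?_⟩
    rcases eq_succ_or_exists_bump (k := u.length) r with rfl | ⟨r, rfl⟩
    · simp
    · rw [insertRow_bump]
      exact bump_ne_succ
  · obtain ⟨j, rfl⟩ : ∃ j, i = j + 1 := Nat.exists_eq_add_one.2 (by
      by_contra h0
      simp_all)
    have hj := (bump_le_succ_iff _ (by simp)).1 hil
    have hrow {r : ℕ} := insertRow_eq_bump_iff (k := u.length) (T := T) (r := r) (c := c) j.succ_ne_zero
    obtain ⟨hex, hnone⟩ := h (j + 1) (by omega) hj c hc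
    rw [getD_append_zero_cons_bump]
    rw [Nat.add_sub_cancel] at hex hnone
    refine ⟨fun hcj => ?_, fun hcj r hr => ?_⟩
    · obtain ⟨r, hr, huniq⟩ := hex hcj
      refine ⟨bump u.length r, by simpa using hr, fun s hs => ?_⟩
      obtain ⟨s, rfl, hTs⟩ := hrow.1 hs
      rw [huniq s hTs]
    · obtain ⟨r, rfl, hTr⟩ := hrow.1 hr
      exact hnone hcj r hTr

lemma IsKohnert.insertRow (hT : IsKohnert (u ++ v) T) :
    IsKohnert (u ++ 0 :: v) (insertRow u.length T) := by
  obtain ⟨hcell, hbound, hcol, hrow, hdesc, hnext⟩ := hT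
  refine ⟨insertRow_cells_pos hcell, ?_, insertRow_content hcol, insertRow_row_le_entry hrow,
    insertRow_entries_descend hdesc, insertRow_next_column hnext⟩
  rw [length_append_zero_cons]
  exact insertRow_entries_bounded (by simp) hbound

end InsertZero

lemma wtList_insertRow (u v : List ℕ) (T : ℕ × ℕ → ℕ) :
    wtList (u ++ 0 :: v) (insertRow u.length T) = (wtList (u ++ v) T).insertIdx u.length 0 := by
  have hsum : (u ++ 0 :: v).sum = (u ++ v).sum := by simp
  apply List.ext_getElem
  · simp [wtList, List.length_insertIdx]
    omega
  · intro j h₁ h₂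
    simp only [wtList, List.getElem_insertIdx, List.getElem_map, List.getElem_range, hsum]
    split_ifs with hlt heq
    · simp [insertRow, show j + 1 ≤ u.length by omega]
    · simp [heq]
    · simp [insertRow, show ¬ j + 1 ≤ u.length by omega, show j - 1 + 1 = j by omega, heq]

def ContainsRowIndex (T : ℕ × ℕ → ℕ) : Prop :=
  ∀ r, 1 ≤ r → (∃ c, T (r, c) ≠ 0) → ∃ c, T (r, c) = r

lemma IsKohnert.isQYKohnert {a : List ℕ} {T : ℕ × ℕ → ℕ} (hT : IsKohnert a T)
    (hrow : ContainsRowIndex T) : IsQYKohnert a T :=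
  ⟨hT, fun r hr hne => Or.inl (hrow r hr hne)⟩

lemma IsKohnert.apply_col_one {α : List ℕ} (hpos : ∀ x ∈ α, 0 < x) {T : ℕ × ℕ → ℕ}
    (hT : IsKohnert α T) {i : ℕ} (hi : 1 ≤ i) (hiα : i ≤ α.length) : T (i, 1) = i := by
  obtain ⟨hcell, -, hcol, hrow, -, -⟩ := hT
  induction i using Nat.strong_induction_on with
  | _ i IH =>
    have hαi : 1 ≤ α.getD (i - 1) 0 := by
      rw [List.getD_eq_getElem α 0 (by omega)]
      exact hpos _ (List.getElem_mem _)
    obtain ⟨r, hr, -⟩ := (hcol i hi hiα 1 le_rfl).1 hαi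
    have hr0 : T (r, 1) ≠ 0 := by omega
    have hr1 := (hcell r 1 hr0).1
    have hri := hrow r 1 hr0
    -- the entry `i` of column 1 sits in a row `r ≤ i`, and rows `r < i` already hold `r`
    rcases hri.lt_or_eq with hlt | heq
    · have := IH r (by omega) hr1 (by omega)
      omega
    · obtain rfl : r = i := heq.trans hr
      exact hr

lemma IsKohnert.containsRowIndex {α : List ℕ} (hpos : ∀ x ∈ α, 0 < x) {T : ℕ × ℕ → ℕ}
    (hT : IsKohnert α T) : ContainsRowIndex T := by
  rintro r hr ⟨c, hc⟩
  have hle := hT.2.2.2.1 r c hc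
  have hbound := (hT.2.1 r c hc).2
  exact ⟨1, hT.apply_col_one hpos hr (by omega)⟩

lemma ContainsRowIndex.insertRow {T : ℕ × ℕ → ℕ} (hT : ContainsRowIndex T) (k : ℕ) :
    ContainsRowIndex (insertRow k T) := by
  rintro r hr ⟨c, hc⟩
  obtain ⟨r, rfl, hTrc⟩ := exists_bump_of_insertRow_ne_zero hc
  have hr0 : bump k r ≠ 0 := by omega
  obtain ⟨c', hc'⟩ := hT r (Nat.one_le_iff_ne_zero.mpr (by simpa using hr0)) ⟨c, hTrc⟩
  exact ⟨c', by rw [insertRow_bump, hc']⟩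

lemma of_flatten_of_insert_zero {P : List ℕ → Prop} (hins : ∀ u v, P (u ++ v) → P (u ++ 0 :: v))
    (a : List ℕ) (h : P (Flatten a)) : P a := by
  suffices ∀ p, P (p ++ Flatten a) → P (p ++ a) from this [] h
  clear h
  induction a with
  | nil => simp [Flatten]
  | cons x t ih =>
    intro p hp
    by_cases hx : x = 0
    · subst hx
      exact hins p t (ih p (by simpa [Flatten] using hp))
    · simpa using ih (p ++ [x]) (by simpa [Flatten, hx] using hp)

def HasIndexedCollision (a : List ℕ) : Prop :=
  ∃ T₁ T₂ : ℕ × ℕ → ℕ, (IsKohnert a T₁ ∧ ContainsRowIndex T₁) ∧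
    (IsKohnert a T₂ ∧ ContainsRowIndex T₂) ∧ T₁ ≠ T₂ ∧ wtList a T₁ = wtList a T₂

lemma HasIndexedCollision.insert_zero {u v : List ℕ} (h : HasIndexedCollision (u ++ v)) :
    HasIndexedCollision (u ++ 0 :: v) := by
  obtain ⟨T₁, T₂, ⟨hK₁, hR₁⟩, ⟨hK₂, hR₂⟩, hne, hwt⟩ := h
  refine ⟨insertRow u.length T₁, insertRow u.length T₂, ⟨hK₁.insertRow, hR₁.insertRow _⟩,
    ⟨hK₂.insertRow, hR₂.insertRow _⟩, (insertRow_injective _).ne hne, ?_⟩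
  rw [wtList_insertRow, wtList_insertRow, hwt]

/-- if `κ_α` is not multiplicity free for a strong composition `α`,
then `κ_a` is not multiplicity free for any weak composition `a` with `flat(a) = α`. -/
theorem stmt18 (α : List ℕ) (hpos : ∀ x ∈ α, 0 < x)
    (h : ∃ T₁ T₂ : ℕ × ℕ → ℕ, IsQYKohnert α T₁ ∧ IsQYKohnert α T₂ ∧
      T₁ ≠ T₂ ∧ wtList α T₁ = wtList α T₂)
    (a : List ℕ) (ha : Flatten a = α) :
    ∃ T₁ T₂ : ℕ × ℕ → ℕ, IsQYKohnert a T₁ ∧ IsQYKohnert a T₂ ∧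
      T₁ ≠ T₂ ∧ wtList a T₁ = wtList a T₂ := by
  obtain ⟨T₁, T₂, hQ₁, hQ₂, hne, hwt⟩ := h
  have hα : HasIndexedCollision α :=
    ⟨T₁, T₂, ⟨hQ₁.1, hQ₁.1.containsRowIndex hpos⟩, ⟨hQ₂.1, hQ₂.1.containsRowIndex hpos⟩, hne, hwt⟩
  obtain ⟨S₁, S₂, ⟨hK₁, hR₁⟩, ⟨hK₂, hR₂⟩, hne', hwt'⟩ :=
    of_flatten_of_insert_zero (fun _ _ => HasIndexedCollision.insert_zero) a (ha ▸ hα)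
  exact ⟨S₁, S₂, hK₁.isQYKohnert hR₁, hK₂.isQYKohnert hR₂, hne', hwt'⟩
end

section
/- Let a = (0, α₁, α₂) be a weak composition with α₁ ≥ α₂ ≥ 4 or (α₁ ≥ 5 and α₂ = 3) or α₁ = α₂. Then all quasi-Yamanouchi Kohnert tableaux of content a have pairwise distinct weights, i.e., κ_{(0,α₁,α₂)} is multiplicity free. -/
/-- The canonical filling of content `(0,α₁,α₂)` with parameters `k p q`:
`2`s in row 2 in columns `1..k` and row 1 in columns `k+1..α₁`;
`3`s in row 3 in columns `1..p`, row 2 in `p+1..q`, row 1 in `q+1..α₂`. -/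
def Fil (α₁ α₂ k p q r c : ℕ) : ℕ :=
  if r = 2 ∧ 1 ≤ c ∧ c ≤ k then 2
  else if r = 1 ∧ k < c ∧ c ≤ α₁ then 2
  else if r = 3 ∧ 1 ≤ c ∧ c ≤ p then 3
  else if r = 2 ∧ p < c ∧ c ≤ q then 3
  else if r = 1 ∧ q < c ∧ c ≤ α₂ then 3
  else 0

lemma kohnert_struct (α₁ α₂ : ℕ) (h21 : α₂ ≤ α₁) (T : ℕ × ℕ → ℕ)
    (hT : IsKohnert [0, α₁, α₂] T) :
    ∃ k p q : ℕ, p ≤ q ∧ q ≤ α₂ ∧ k ≤ α₁ ∧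
      ((k ≤ p ∧ q = α₂) ∨ (α₂ < k ∧ p = q)) ∧
      ∀ r c, T (r, c) = Fil α₁ α₂ k p q r c := by
  obtain ⟨hpos, hrange, hcol, hrow, hdesc, hiv⟩ := hT
  have col2 : ∀ c, 1 ≤ c → (c ≤ α₁ → ∃! r, T (r, c) = 2) ∧ (α₁ < c → ∀ r, T (r, c) ≠ 2) := by
    intro c hc
    simpa using hcol 2 (by norm_num) (by simp) c hc
  have col3 : ∀ c, 1 ≤ c → (c ≤ α₂ → ∃! r, T (r, c) = 3) ∧ (α₂ < c → ∀ r, T (r, c) ≠ 3) := by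
    intro c hc
    simpa using hcol 3 (by norm_num) (by simp) c hc
  have no1 : ∀ r c, T (r, c) ≠ 1 := by
    intro r c h1
    have hne : T (r, c) ≠ 0 := by rw [h1]; exact one_ne_zero
    have hc := (hpos r c hne).2
    have h01 := (hcol 1 le_rfl (by simp) c hc).2
    simp only [show (1:ℕ) - 1 = 0 from rfl, List.getD_cons_zero] at h01
    exact h01 hc r h1
  have val23 : ∀ r c, T (r, c) ≠ 0 →
      (T (r, c) = 2 ∨ T (r, c) = 3) ∧ 1 ≤ r ∧ r ≤ T (r, c) ∧ 1 ≤ c := by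
    intro r c hne
    have h1 := hrange r c hne
    simp only [List.length_cons, List.length_nil] at h1
    have h2 := hpos r c hne
    have h3 := hrow r c hne
    have h4 := no1 r c
    exact ⟨by omega, h2.1, h3, h2.2⟩
  classical
  -- the 2s
  set S2 : Finset ℕ := (Finset.Icc 1 α₁).filter (fun c => T (2, c) = 2) with hS2
  set k : ℕ := S2.sup id with hkdef
  have hS2mem : ∀ c, c ∈ S2 ↔ (1 ≤ c ∧ c ≤ α₁ ∧ T (2, c) = 2) := by
    intro c
    simp [hS2, Finset.mem_filter, Finset.mem_Icc, and_assoc]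
  have hle_k : ∀ c, T (2, c) = 2 → c ≤ k := by
    intro c hc
    have h0 : T (2, c) ≠ 0 := by rw [hc]; norm_num
    have hc1 := (hpos 2 c h0).2
    have hca : c ≤ α₁ := by
      by_contra hgt
      exact (col2 c hc1).2 (by omega) 2 hc
    exact Finset.le_sup (f := id) ((hS2mem c).2 ⟨hc1, hca, hc⟩)
  have hk_in : k ≠ 0 → T (2, k) = 2 ∧ k ≤ α₁ := by
    intro h0
    have hne : S2.Nonempty := by
      rcases S2.eq_empty_or_nonempty with he | hne
      · exact absurd (by rw [hkdef, he]; simp) h0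
      · exact hne
    obtain ⟨b, hb, hbe⟩ := Finset.exists_mem_eq_sup S2 hne id
    rw [hS2mem] at hb
    have hkb : k = b := hbe
    rw [hkb]
    exact ⟨hb.2.2, hb.2.1⟩
  have hka : k ≤ α₁ := by
    rcases Nat.eq_zero_or_pos k with h | h
    · omega
    · exact (hk_in (by omega)).2
  have char22 : ∀ c, T (2, c) = 2 ↔ (1 ≤ c ∧ c ≤ k) := by
    intro c
    constructor
    · intro hc
      exact ⟨(hpos 2 c (by rw [hc]; norm_num)).2, hle_k c hc⟩
    · rintro ⟨h1, h2⟩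
      obtain ⟨hTk, hka'⟩ := hk_in (by omega)
      by_cases hck : c = k
      · rw [hck]; exact hTk
      · have hlt : c < k := by omega
        obtain ⟨r, hr, -⟩ := (col2 c h1).1 (by omega)
        have h2r : 2 ≤ r := hdesc r c 2 k (by rw [hr]; norm_num) (by rw [hr, hTk]) hlt
        have hr2 : r ≤ 2 := by
          have := hrow r c (by rw [hr]; norm_num)
          omega
        have hre : r = 2 := by omega
        rw [hre] at hr
        exact hr
  have char21 : ∀ c, T (1, c) = 2 ↔ (k < c ∧ c ≤ α₁) := by
    intro c
    constructor
    · intro hc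
      have h1c := (hpos 1 c (by rw [hc]; norm_num)).2
      have hca : c ≤ α₁ := by
        by_contra hgt
        exact (col2 c h1c).2 (by omega) 1 hc
      refine ⟨?_, hca⟩
      by_contra hck
      have hT2 : T (2, c) = 2 := (char22 c).2 ⟨h1c, by omega⟩
      obtain ⟨r, hr, hu⟩ := (col2 c h1c).1 hca
      have e1 := hu 1 hc
      have e2 := hu 2 hT2
      omega
    · rintro ⟨h1, h2⟩
      obtain ⟨r, hr, -⟩ := (col2 c (by omega)).1 h2
      have hr1 : 1 ≤ r := (hpos r c (by rw [hr]; norm_num)).1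
      have hr2 : r ≤ 2 := by
        have := hrow r c (by rw [hr]; norm_num)
        omega
      have : r = 1 ∨ r = 2 := by omega
      rcases this with hre | hre
      · rw [hre] at hr; exact hr
      · exfalso
        rw [hre] at hr
        have := ((char22 c).1 hr).2
        omega
  -- the 3s
  set S3 : Finset ℕ := (Finset.Icc 1 α₂).filter (fun c => T (3, c) = 3) with hS3
  set p : ℕ := S3.sup id with hpdef
  set S3q : Finset ℕ := (Finset.Icc 1 α₂).filter (fun c => T (3, c) = 3 ∨ T (2, c) = 3) with hS3q
  set q : ℕ := S3q.sup id with hqdef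
  have hboundc : ∀ r c, T (r, c) = 3 → 1 ≤ c ∧ c ≤ α₂ := by
    intro r c hc
    have h1c := (hpos r c (by rw [hc]; norm_num)).2
    refine ⟨h1c, ?_⟩
    by_contra hgt
    exact (col3 c h1c).2 (by omega) r hc
  have hle_p : ∀ c, T (3, c) = 3 → c ≤ p := by
    intro c hc
    obtain ⟨h1, h2⟩ := hboundc 3 c hc
    refine Finset.le_sup (f := id) ?_
    rw [hS3]
    simp [Finset.mem_filter, Finset.mem_Icc]
    exact ⟨⟨h1, h2⟩, hc⟩
  have hp_in : p ≠ 0 → T (3, p) = 3 ∧ p ≤ α₂ := by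
    intro h0
    have hne : S3.Nonempty := by
      rcases S3.eq_empty_or_nonempty with he | hne
      · exact absurd (by rw [hpdef, he]; simp) h0
      · exact hne
    obtain ⟨b, hb, hbe⟩ := Finset.exists_mem_eq_sup S3 hne id
    rw [hS3] at hb
    simp [Finset.mem_filter, Finset.mem_Icc] at hb
    have hpb : p = b := hbe
    rw [hpb]
    exact ⟨hb.2, hb.1.2⟩
  have hle_q : ∀ c, (T (3, c) = 3 ∨ T (2, c) = 3) → c ≤ q := by
    intro c hc
    have hb : 1 ≤ c ∧ c ≤ α₂ := by
      rcases hc with h | h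
      · exact hboundc 3 c h
      · exact hboundc 2 c h
    refine Finset.le_sup (f := id) ?_
    rw [hS3q]
    simp [Finset.mem_filter, Finset.mem_Icc]
    exact ⟨⟨hb.1, hb.2⟩, hc⟩
  have hq_in : q ≠ 0 → (T (3, q) = 3 ∨ T (2, q) = 3) ∧ q ≤ α₂ := by
    intro h0
    have hne : S3q.Nonempty := by
      rcases S3q.eq_empty_or_nonempty with he | hne
      · exact absurd (by rw [hqdef, he]; simp) h0
      · exact hne
    obtain ⟨b, hb, hbe⟩ := Finset.exists_mem_eq_sup S3q hne id
    rw [hS3q] at hb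
    simp [Finset.mem_filter, Finset.mem_Icc] at hb
    have hqb : q = b := hbe
    rw [hqb]
    exact ⟨hb.2, hb.1.2⟩
  have hqa : q ≤ α₂ := by
    rcases Nat.eq_zero_or_pos q with h | h
    · omega
    · exact (hq_in (by omega)).2
  have hpq : p ≤ q := by
    rcases Nat.eq_zero_or_pos p with h | h
    · omega
    · exact hle_q p (Or.inl (hp_in (by omega)).1)
  have char33 : ∀ c, T (3, c) = 3 ↔ (1 ≤ c ∧ c ≤ p) := by
    intro c
    constructor
    · intro hc
      exact ⟨(hboundc 3 c hc).1, hle_p c hc⟩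
    · rintro ⟨h1, h2⟩
      obtain ⟨hTp, hpa⟩ := hp_in (by omega)
      by_cases hcp : c = p
      · rw [hcp]; exact hTp
      · have hlt : c < p := by omega
        obtain ⟨r, hr, -⟩ := (col3 c h1).1 (by omega)
        have h3r : 3 ≤ r := hdesc r c 3 p (by rw [hr]; norm_num) (by rw [hr, hTp]) hlt
        have hr3 : r ≤ 3 := by
          have := hrow r c (by rw [hr]; norm_num)
          omega
        have hre : r = 3 := by omega
        rw [hre] at hr
        exact hr
  have char323 : ∀ c, (T (3, c) = 3 ∨ T (2, c) = 3) ↔ (1 ≤ c ∧ c ≤ q) := by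
    intro c
    constructor
    · intro hc
      have hb : 1 ≤ c ∧ c ≤ α₂ := by
        rcases hc with h | h
        · exact hboundc 3 c h
        · exact hboundc 2 c h
      exact ⟨hb.1, hle_q c hc⟩
    · rintro ⟨h1, h2⟩
      obtain ⟨hTq, hqa'⟩ := hq_in (by omega)
      by_cases hcq : c = q
      · rw [hcq]; exact hTq
      · have hlt : c < q := by omega
        obtain ⟨r, hr, -⟩ := (col3 c h1).1 (by omega)
        have hr3 : r ≤ 3 := by
          have := hrow r c (by rw [hr]; norm_num)
          omega
        have h2r : 2 ≤ r := by
          rcases hTq with hq3 | hq2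
          · have := hdesc r c 3 q (by rw [hr]; norm_num) (by rw [hr, hq3]) hlt
            omega
          · exact hdesc r c 2 q (by rw [hr]; norm_num) (by rw [hr, hq2]) hlt
        have : r = 2 ∨ r = 3 := by omega
        rcases this with hre | hre
        · rw [hre] at hr; exact Or.inr hr
        · rw [hre] at hr; exact Or.inl hr
  have char32 : ∀ c, T (2, c) = 3 ↔ (p < c ∧ c ≤ q) := by
    intro c
    constructor
    · intro hc
      have hb := hboundc 2 c hc
      refine ⟨?_, hle_q c (Or.inr hc)⟩
      by_contra hcp
      have hT3 : T (3, c) = 3 := (char33 c).2 ⟨hb.1, by omega⟩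
      obtain ⟨r, hr, hu⟩ := (col3 c hb.1).1 hb.2
      have e1 := hu 2 hc
      have e2 := hu 3 hT3
      omega
    · rintro ⟨h1, h2⟩
      have hor := (char323 c).2 ⟨by omega, h2⟩
      rcases hor with h | h
      · exfalso
        have := ((char33 c).1 h).2
        omega
      · exact h
  have char31 : ∀ c, T (1, c) = 3 ↔ (q < c ∧ c ≤ α₂) := by
    intro c
    constructor
    · intro hc
      have hb := hboundc 1 c hc
      refine ⟨?_, hb.2⟩
      by_contra hcq
      have hor := (char323 c).2 ⟨hb.1, by omega⟩
      obtain ⟨r, hr, hu⟩ := (col3 c hb.1).1 hb.2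
      have e1 := hu 1 hc
      rcases hor with h | h
      · have e2 := hu 3 h; omega
      · have e2 := hu 2 h; omega
    · rintro ⟨h1, h2⟩
      obtain ⟨r, hr, -⟩ := (col3 c (by omega)).1 h2
      have hr1 : 1 ≤ r := (hpos r c (by rw [hr]; norm_num)).1
      have hr3 : r ≤ 3 := by
        have := hrow r c (by rw [hr]; norm_num)
        omega
      have : r = 1 ∨ r = 2 ∨ r = 3 := by omega
      rcases this with hre | hre | hre
      · rw [hre] at hr; exact hr
      · exfalso
        rw [hre] at hr
        have := ((char32 c).1 hr).2
        omega
      · exfalso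
        rw [hre] at hr
        have := ((char33 c).1 hr).2
        omega
  -- the branch dichotomy
  have hbranch : (k ≤ p ∧ q = α₂) ∨ (α₂ < k ∧ p = q) := by
    by_cases hkq : k ≤ q
    · left
      constructor
      · by_contra hpk
        have h1 : T (2, p + 1) = 2 := (char22 (p + 1)).2 ⟨by omega, by omega⟩
        have h2 : T (2, p + 1) = 3 := (char32 (p + 1)).2 ⟨by omega, by omega⟩
        omega
      · by_contra hq
        have hq' : q < α₂ := by omega
        have h1 : T (1, q + 1) = 3 := (char31 (q + 1)).2 ⟨by omega, by omega⟩
        have h2 : T (1, q + 1) = 2 := (char21 (q + 1)).2 ⟨by omega, by omega⟩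
        omega
    · right
      have hak : α₂ < k := by
        by_contra hka2
        have h1 : T (1, k) = 3 := (char31 k).2 ⟨by omega, by omega⟩
        have h2 : T (2, k) = 2 := (char22 k).2 ⟨by omega, le_rfl⟩
        obtain ⟨r'', hr'', hT''⟩ := hiv 2 1 k (by omega) (by omega) (by omega) (by omega)
        rw [h2] at hT''
        have hrr2 : r'' ≤ 2 := by
          have := hrow r'' (k + 1) (by rw [hT'']; norm_num)
          omega
        have : r'' = 2 := by omega
        rw [this] at hT''
        have := ((char22 (k + 1)).1 hT'').2
        omega
      refine ⟨hak, ?_⟩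
      by_contra hpq'
      have h1 : T (2, p + 1) = 3 := (char32 (p + 1)).2 ⟨by omega, by omega⟩
      have h2 : T (2, p + 1) = 2 := (char22 (p + 1)).2 ⟨by omega, by omega⟩
      omega
  refine ⟨k, p, q, hpq, hqa, hka, hbranch, ?_⟩
  intro r c
  simp only [Fil]
  split_ifs with h1 h2 h3 h4 h5
  · obtain ⟨hr, hc⟩ := h1; rw [hr]; exact (char22 c).2 hc
  · obtain ⟨hr, hc⟩ := h2; rw [hr]; exact (char21 c).2 hc
  · obtain ⟨hr, hc⟩ := h3; rw [hr]; exact (char33 c).2 hc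
  · obtain ⟨hr, hc⟩ := h4; rw [hr]; exact (char32 c).2 hc
  · obtain ⟨hr, hc⟩ := h5; rw [hr]; exact (char31 c).2 hc
  · by_contra h0
    obtain ⟨hv, h1r, hrT, h1c⟩ := val23 r c h0
    rcases hv with hv2 | hv3
    · have : r = 1 ∨ r = 2 := by omega
      rcases this with hre | hre
      · rw [hre] at hv2; exact h2 ⟨hre, (char21 c).1 hv2⟩
      · rw [hre] at hv2; exact h1 ⟨hre, (char22 c).1 hv2⟩
    · have : r = 1 ∨ r = 2 ∨ r = 3 := by omega
      rcases this with hre | hre | hre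
      · rw [hre] at hv3; exact h5 ⟨hre, (char31 c).1 hv3⟩
      · rw [hre] at hv3; exact h4 ⟨hre, (char32 c).1 hv3⟩
      · rw [hre] at hv3; exact h3 ⟨hre, (char33 c).1 hv3⟩

lemma fil_w3 (α₁ α₂ k p q : ℕ) (hpq : p ≤ q) (hq : q ≤ α₂) (hk : k ≤ α₁) (h21 : α₂ ≤ α₁) :
    ((Finset.Icc 1 (α₁ + α₂)).filter fun c => Fil α₁ α₂ k p q 3 c ≠ 0).card = p := by
  have hset : ((Finset.Icc 1 (α₁ + α₂)).filter fun c => Fil α₁ α₂ k p q 3 c ≠ 0)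
      = Finset.Icc 1 p := by
    ext c
    simp [Fil, Finset.mem_filter, Finset.mem_Icc]
    omega
  rw [hset, Nat.card_Icc]
  omega

lemma fil_w2 (α₁ α₂ k p q : ℕ) (hpq : p ≤ q) (hq : q ≤ α₂) (hk : k ≤ α₁) (h21 : α₂ ≤ α₁)
    (hb : k ≤ p ∨ p = q) :
    ((Finset.Icc 1 (α₁ + α₂)).filter fun c => Fil α₁ α₂ k p q 2 c ≠ 0).card = k + (q - p) := by
  have hset : ((Finset.Icc 1 (α₁ + α₂)).filter fun c => Fil α₁ α₂ k p q 2 c ≠ 0)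
      = Finset.Icc 1 k ∪ Finset.Icc (p + 1) q := by
    ext c
    simp [Fil, Finset.mem_filter, Finset.mem_union, Finset.mem_Icc]
    split_ifs with h1 h2 <;> simp <;> omega
  rw [hset, Finset.card_union_of_disjoint, Nat.card_Icc, Nat.card_Icc]
  · omega
  · refine Finset.disjoint_left.2 ?_
    intro c hc1 hc2
    simp only [Finset.mem_Icc] at hc1 hc2
    omega

/-- for `a = (0, α₁, α₂)` with `α₁ ≥ α₂ ≥ 4`, or `α₁ ≥ 5` and `α₂ = 3`,
or `α₁ = α₂`, the key polynomial `κ_{(0,α₁,α₂)}` is multiplicity free. -/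
theorem stmt19 (α₁ α₂ : ℕ)
    (h : (α₂ ≤ α₁ ∧ 4 ≤ α₂) ∨ (5 ≤ α₁ ∧ α₂ = 3) ∨ α₁ = α₂) :
    MultFree [0, α₁, α₂] := by
  have h21 : α₂ ≤ α₁ := by omega
  intro T₁ T₂ hQ1 hQ2 hwt
  obtain ⟨k, p, q, hpq, hqa, hka, hb, hfil⟩ := kohnert_struct α₁ α₂ h21 T₁ hQ1.1
  obtain ⟨k', p', q', hpq', hqa', hka', hb', hfil'⟩ := kohnert_struct α₁ α₂ h21 T₂ hQ2.1
  have hr3 : List.range ([0, α₁, α₂] : List ℕ).length = [0, 1, 2] := rfl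
  have hsum : ([0, α₁, α₂] : List ℕ).sum = α₁ + α₂ := by simp
  unfold wtList at hwt
  rw [hr3, hsum] at hwt
  simp only [List.map_cons, List.map_nil, List.cons.injEq, and_true] at hwt
  obtain ⟨hw1, hw2, hw3⟩ := hwt
  norm_num at hw2 hw3
  have hfilt1 : ∀ r, ((Finset.Icc 1 (α₁ + α₂)).filter fun c => T₁ (r, c) ≠ 0)
      = ((Finset.Icc 1 (α₁ + α₂)).filter fun c => Fil α₁ α₂ k p q r c ≠ 0) := by
    intro r
    apply Finset.filter_congr
    intro c _
    rw [hfil r c]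
  have hfilt2 : ∀ r, ((Finset.Icc 1 (α₁ + α₂)).filter fun c => T₂ (r, c) ≠ 0)
      = ((Finset.Icc 1 (α₁ + α₂)).filter fun c => Fil α₁ α₂ k' p' q' r c ≠ 0) := by
    intro r
    apply Finset.filter_congr
    intro c _
    rw [hfil' r c]
  rw [hfilt1 3, hfilt2 3, fil_w3 α₁ α₂ k p q hpq hqa hka h21,
    fil_w3 α₁ α₂ k' p' q' hpq' hqa' hka' h21] at hw3
  have hb1 : k ≤ p ∨ p = q := by tauto
  have hb1' : k' ≤ p' ∨ p' = q' := by tauto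
  rw [hfilt1 2, hfilt2 2, fil_w2 α₁ α₂ k p q hpq hqa hka h21 hb1,
    fil_w2 α₁ α₂ k' p' q' hpq' hqa' hka' h21 hb1'] at hw2
  have hk : k = k' := by omega
  have hp : p = p' := by omega
  have hq : q = q' := by omega
  funext x
  obtain ⟨r, c⟩ := x
  rw [hfil r c, hfil' r c, hk, hp, hq]
end
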